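/- arXiv:2405.11736 — 12 statements merged into one kernel-verified Lean document; each statement's English description precedes it below -/
import Mathlib

section
/- Let σ = (σ_0,…,σ_n) be a changemaker vector and let x be a positive integer. Then T^σ_m = xp, where m = (x²p + x|σ|₁)/2 (an integer since p ≡ |σ|₁ mod 2). Equivalently, xp is the greatest element of the set {σ·α : α ∈ ℤ_{≥0}^{n+1}, Σ_j α_j(α_j+1) ≤ x²p + x|σ|₁}. -/
open Finset

/-- `σ` is a changemaker vector: all entries are positive and every integer `k` with
`0 ≤ k ≤ σ_0 + ⋯ + σ_n` is the sum of a subset of the entries. -/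
def IsChangemaker {n : ℕ} (σ : Fin (n + 1) → ℕ) : Prop :=
  (∀ i, 0 < σ i) ∧
    ∀ k : ℕ, k ≤ ∑ i, σ i → ∃ A : Finset (Fin (n + 1)), ∑ i ∈ A, σ i = k

/-- `Tcm σ m = T^σ_m`, the maximum of `σ·α` over all `α ∈ ℤ_{≥0}^{n+1}` with
`Σ_j α_j (α_j + 1) ≤ 2m` (the maximum exists: the set is nonempty and bounded). -/
noncomputable def Tcm {n : ℕ} (σ : Fin (n + 1) → ℕ) (m : ℕ) : ℕ :=
  sSup {t : ℕ | ∃ α : Fin (n + 1) → ℕ,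
    (∑ j, α j * (α j + 1)) ≤ 2 * m ∧ t = ∑ j, σ j * α j}

/-- `Vcm σ i = V^σ_i`, the `i`-th relevant coefficient of `σ`:
the least `m` with `T^σ_m ≥ i` (and `V^σ_0 = 0`). -/
noncomputable def Vcm {n : ℕ} (σ : Fin (n + 1) → ℕ) (i : ℕ) : ℕ :=
  sInf {m : ℕ | i ≤ Tcm σ m}

/-!
For `c, a ∈ ℕ` we have `(a - c)(a - c + 1) ≥ 0`, i.e. `2ca + c ≤ a(a + 1) + c²`, with equality
at `a = c`. Summing over the coordinates with `c = xσ` gives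
`2x(σ·α) + x|σ|₁ ≤ Σ α_j(α_j + 1) + x²p ≤ 2m + x²p = 2x²p + x|σ|₁`, so `σ·α ≤ xp` on `S_{≤m}`,
and `α = xσ` attains it.
-/

lemma two_mul_mul_add_le_mul_succ_add_sq (a c : ℕ) :
    2 * (c * a) + c ≤ a * (a + 1) + c ^ 2 := by
  have h : 0 ≤ ((a : ℤ) - c) * ((a : ℤ) - c + 1) := by
    rcases le_or_gt (c : ℤ) a with hca | hca <;> nlinarith
  zify
  nlinarith

lemma two_mul_sum_mul_add_sum_le {ι : Type*} (s : Finset ι) (a c : ι → ℕ) :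
    2 * ∑ j ∈ s, c j * a j + ∑ j ∈ s, c j ≤
      ∑ j ∈ s, a j * (a j + 1) + ∑ j ∈ s, c j ^ 2 := by
  rw [mul_sum, ← sum_add_distrib, ← sum_add_distrib]
  exact sum_le_sum fun j _ => two_mul_mul_add_le_mul_succ_add_sq (a j) (c j)

theorem stmt_0_general {n : ℕ} (σ : Fin (n + 1) → ℕ)
    (x : ℕ) (hx : 0 < x) (m : ℕ)
    (hm : 2 * m = x ^ 2 * (∑ i, (σ i) ^ 2) + x * (∑ i, σ i)) :
    Tcm σ m = x * (∑ i, (σ i) ^ 2) := by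
  refine IsGreatest.csSup_eq ⟨⟨fun j => x * σ j, ?_, ?_⟩, ?_⟩
  · simp only [hm, mul_sum, ← sum_add_distrib]
    exact (sum_congr rfl fun j _ => by ring).le
  · simp only [mul_sum]
    exact sum_congr rfl fun j _ => by ring
  · rintro t ⟨α, hα, rfl⟩
    have key := two_mul_sum_mul_add_sum_le univ α (fun j => x * σ j)
    simp only [mul_pow, mul_assoc, ← mul_sum] at key
    have h2x : 2 * x * ∑ j, σ j * α j ≤ 2 * x * (x * ∑ i, σ i ^ 2) := by nlinarith
    exact le_of_mul_le_mul_left h2x (by positivity)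

theorem stmt_0 {n : ℕ} (σ : Fin (n + 1) → ℕ) (hσ : IsChangemaker σ)
    (x : ℕ) (hx : 0 < x) (m : ℕ)
    (hm : 2 * m = x ^ 2 * (∑ i, (σ i) ^ 2) + x * (∑ i, σ i)) :
    Tcm σ m = x * (∑ i, (σ i) ^ 2) :=
  stmt_0_general σ x hx m hm
end

section
/- Let σ = (σ_0,…,σ_n) be a changemaker vector and let x be a positive integer. Then T^σ_m = xp − |σ|₁, where m = (x²p − x|σ|₁)/2 (an integer since p ≡ |σ|₁ mod 2). Equivalently, xp − |σ|₁ is the greatest element of the set {σ·α : α ∈ ℤ_{≥0}^{n+1}, Σ_j α_j(α_j+1) ≤ x²p − x|σ|₁}. -/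
/-!
With `β_j := x σ_j - 1`, the point `β` satisfies `Σ β_j (β_j + 1) = x²p - x|σ|₁ = 2m` and
`σ·β = xp - |σ|₁`. It is the maximizer: since `x σ_j = β_j + 1`, the integer inequality
`(α_j - β_j)(α_j - β_j - 1) ≥ 0` summed over `j` gives
`2x (σ·α) + 2m ≤ Σ α_j (α_j + 1) + 2x (σ·β)`, so `σ·α ≤ σ·β` whenever `Σ α_j (α_j + 1) ≤ 2m`.
-/

open Finset

theorem two_mul_succ_mul_add_le (a b : ℕ) :
    2 * ((b + 1) * a) + b * (b + 1) ≤ a * (a + 1) + 2 * ((b + 1) * b) := by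
  rcases le_or_gt a b with h | h <;> nlinarith

theorem sum_succ_mul_le_of_sum_mul_succ_le {ι : Type*} (s : Finset ι) (α β : ι → ℕ)
    (h : ∑ j ∈ s, α j * (α j + 1) ≤ ∑ j ∈ s, β j * (β j + 1)) :
    ∑ j ∈ s, (β j + 1) * α j ≤ ∑ j ∈ s, (β j + 1) * β j := by
  have hsum := sum_le_sum fun j (_ : j ∈ s) => two_mul_succ_mul_add_le (α j) (β j)
  simp only [sum_add_distrib, ← mul_sum] at hsum
  omega

theorem Tcm_eq_of_forall_le {n : ℕ} (σ : Fin (n + 1) → ℕ) (m : ℕ) (β : Fin (n + 1) → ℕ)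
    (hβ : ∑ j, β j * (β j + 1) ≤ 2 * m)
    (hmax : ∀ α : Fin (n + 1) → ℕ, ∑ j, α j * (α j + 1) ≤ 2 * m →
      ∑ j, σ j * α j ≤ ∑ j, σ j * β j) :
    Tcm σ m = ∑ j, σ j * β j :=
  IsGreatest.csSup_eq ⟨⟨β, hβ, rfl⟩, by rintro _ ⟨α, hα, rfl⟩; exact hmax α hα⟩

theorem stmt_2 {n : ℕ} (σ : Fin (n + 1) → ℕ) (hσ : IsChangemaker σ)
    (x : ℕ) (hx : 0 < x) (m : ℕ)
    (hm : 2 * m + x * (∑ i, σ i) = x ^ 2 * (∑ i, (σ i) ^ 2)) :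
    Tcm σ m + (∑ i, σ i) = x * (∑ i, (σ i) ^ 2) := by
  set β : Fin (n + 1) → ℕ := fun j => x * σ j - 1
  have hβ : ∀ j, β j + 1 = x * σ j := fun j =>
    Nat.sub_add_cancel (Nat.mul_pos hx (hσ.1 j))
  have hβ_norm : ∑ j, β j * (β j + 1) = 2 * m := by
    have : ∑ j, β j * (β j + 1) + x * ∑ i, σ i = x ^ 2 * ∑ i, σ i ^ 2 := by
      simp only [mul_sum, ← sum_add_distrib]
      refine sum_congr rfl fun j _ => ?_
      rw [← mul_pow, ← hβ j]
      ring
    omega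
  have hmul : ∀ α : Fin (n + 1) → ℕ, x * ∑ j, σ j * α j = ∑ j, (β j + 1) * α j := fun α => by
    simp only [mul_sum, hβ, mul_assoc]
  have hT : Tcm σ m = ∑ j, σ j * β j := by
    refine Tcm_eq_of_forall_le σ m β hβ_norm.le fun α hα => Nat.le_of_mul_le_mul_left ?_ hx
    rw [hmul, hmul]
    exact sum_succ_mul_le_of_sum_mul_succ_le _ α β (hβ_norm ▸ hα)
  calc Tcm σ m + ∑ i, σ i = ∑ j, σ j * (β j + 1) := by
        rw [hT, ← sum_add_distrib]; simp only [mul_add, mul_one]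
    _ = x * ∑ i, σ i ^ 2 := by
        simp only [hβ, mul_sum]
        exact sum_congr rfl fun j _ => by ring
end

section
/- Let σ = (σ_0,…,σ_n) be a changemaker vector and let x be a positive integer. Then the (xp − |σ|₁)-th relevant coefficient of σ satisfies 2·V^σ_{xp − |σ|₁} = x²p − x|σ|₁. -/
/-!
The map `t ↦ t (t + 1)` is convex on `ℤ`, and its tangent slope at `c = xσ_j - 1` is
`2xσ_j`. Summing the tangent-line bounds shows that `σ·α ≥ xp - |σ|₁` forces
`Σ α_j (α_j + 1) ≥ x (xp - |σ|₁)`, and `α_j = xσ_j - 1` attains both bounds with equality.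
Hence `T^σ_m ≥ xp - |σ|₁` exactly when `2m ≥ x (xp - |σ|₁)`, an even number since it equals
`Σ α_j (α_j + 1)` for that minimiser.
-/

open Finset

theorem Int.two_mul_succ_mul_sub_le (a c : ℤ) :
    2 * (c + 1) * (a - c) ≤ a * (a + 1) - c * (c + 1) := by
  nlinarith [Int.le_self_sq (a - c)]

section Quadratic

variable {ι : Type*} [Fintype ι] {σ : ι → ℕ} {x k : ℕ}

theorem mul_le_sum_mul_succ_of_le_sum_mul (hk : k + ∑ i, σ i = x * ∑ i, σ i ^ 2)
    {α : ι → ℕ} (hα : k ≤ ∑ j, σ j * α j) : x * k ≤ ∑ j, α j * (α j + 1) := by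
  set c : ι → ℤ := fun j => x * σ j - 1
  have hkZ : (k : ℤ) + ∑ j, (σ j : ℤ) = x * ∑ j, (σ j : ℤ) ^ 2 := by exact_mod_cast hk
  have hck : ∑ j, (σ j : ℤ) * c j = k := by
    have : ∑ j, (σ j : ℤ) * c j + ∑ j, (σ j : ℤ) = x * ∑ j, (σ j : ℤ) ^ 2 := by
      rw [← sum_add_distrib, mul_sum]
      exact sum_congr rfl fun j _ => by simp only [c]; ring
    linarith
  have hcc : ∑ j, c j * (c j + 1) = x * ∑ j, (σ j : ℤ) * c j := by
    rw [mul_sum]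
    exact sum_congr rfl fun j _ => by simp only [c]; ring
  have tangent : ∑ j, 2 * (c j + 1) * (α j - c j)
      ≤ ∑ j, ((α j : ℤ) * (α j + 1) - c j * (c j + 1)) :=
    sum_le_sum fun j _ => Int.two_mul_succ_mul_sub_le _ _
  have hslope : ∑ j, 2 * (c j + 1) * (α j - c j) = 2 * x * (∑ j, (σ j : ℤ) * α j - k) := by
    rw [← hck, ← sum_sub_distrib, mul_sum]
    exact sum_congr rfl fun j _ => by simp only [c]; ring
  rw [sum_sub_distrib, hcc, hck, hslope] at tangent
  have hαZ : (k : ℤ) ≤ ∑ j, (σ j : ℤ) * α j := by exact_mod_cast hα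
  have : (x : ℤ) * k ≤ ∑ j, (α j : ℤ) * (α j + 1) := by nlinarith [Int.natCast_nonneg x]
  exact_mod_cast this

theorem exists_sum_mul_eq_and_sum_mul_succ_eq (hx : 0 < x)
    (hk : k + ∑ i, σ i = x * ∑ i, σ i ^ 2) :
    ∃ β : ι → ℕ, ∑ j, σ j * β j = k ∧ ∑ j, β j * (β j + 1) = x * k := by
  have hσβ : ∑ j, σ j * (x * σ j - 1) = k := by
    have hcoord : ∀ j, σ j * (x * σ j - 1) + σ j = x * σ j ^ 2 := fun j => by
      rcases Nat.eq_zero_or_pos (σ j) with h | h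
      · simp [h]
      · have : 1 ≤ x * σ j := Nat.mul_pos hx h
        zify [this]; ring
    have : ∑ j, σ j * (x * σ j - 1) + ∑ j, σ j = k + ∑ j, σ j := by
      rw [hk, ← sum_add_distrib, mul_sum]
      exact sum_congr rfl fun j _ => hcoord j
    omega
  refine ⟨fun j => x * σ j - 1, hσβ, ?_⟩
  rw [← hσβ, mul_sum]
  refine sum_congr rfl fun j _ => ?_
  rcases Nat.eq_zero_or_pos (x * σ j) with h | h
  · simp [h]
  · rw [Nat.sub_add_cancel h]; ring

end Quadratic

section RelevantCoefficient

variable {n : ℕ} {σ : Fin (n + 1) → ℕ}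

theorem le_Tcm_iff {k m : ℕ} :
    k ≤ Tcm σ m ↔ ∃ α : Fin (n + 1) → ℕ,
      ∑ j, α j * (α j + 1) ≤ 2 * m ∧ k ≤ ∑ j, σ j * α j := by
  set S := {t : ℕ | ∃ α : Fin (n + 1) → ℕ,
    (∑ j, α j * (α j + 1)) ≤ 2 * m ∧ t = ∑ j, σ j * α j}
  have hS : S.Nonempty := ⟨0, fun _ => 0, by simp, by simp⟩
  have hSbdd : BddAbove S := by
    refine ⟨(∑ j, σ j) * (2 * m), ?_⟩
    rintro t ⟨α, hα, rfl⟩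
    rw [sum_mul]
    refine sum_le_sum fun j _ => Nat.mul_le_mul_left _ ?_
    calc α j ≤ α j * (α j + 1) := Nat.le_mul_of_pos_right _ (Nat.succ_pos _)
      _ ≤ ∑ i, α i * (α i + 1) :=
        single_le_sum (f := fun i => α i * (α i + 1)) (fun i _ => Nat.zero_le _) (mem_univ j)
      _ ≤ 2 * m := hα
  constructor
  · intro hk
    obtain ⟨α, hα, hαS⟩ := Nat.sSup_mem hS hSbdd
    exact ⟨α, hα, hαS ▸ hk⟩
  · rintro ⟨α, hα, hk⟩
    exact le_csSup_of_le hSbdd ⟨α, hα, rfl⟩ hk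

theorem le_Tcm_iff_mul_le {x k m : ℕ} (hx : 0 < x)
    (hk : k + ∑ i, σ i = x * ∑ i, σ i ^ 2) : k ≤ Tcm σ m ↔ x * k ≤ 2 * m := by
  rw [le_Tcm_iff]
  constructor
  · rintro ⟨α, hα, hσα⟩
    exact (mul_le_sum_mul_succ_of_le_sum_mul hk hσα).trans hα
  · intro hm
    obtain ⟨β, hσβ, hβ⟩ := exists_sum_mul_eq_and_sum_mul_succ_eq hx hk
    exact ⟨β, hβ ▸ hm, hσβ.ge⟩

end RelevantCoefficient

theorem stmt_3_general {n : ℕ} (σ : Fin (n + 1) → ℕ)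
    (x : ℕ) (hx : 0 < x) (k : ℕ)
    (hk : k + (∑ i, σ i) = x * ∑ i, (σ i) ^ 2) :
    2 * Vcm σ k + x * (∑ i, σ i) = x ^ 2 * (∑ i, (σ i) ^ 2) := by
  obtain ⟨β, -, hβ⟩ := exists_sum_mul_eq_and_sum_mul_succ_eq hx hk
  obtain ⟨m₀, hm₀⟩ : Even (x * k) := hβ ▸ even_sum _ fun j _ => Nat.even_mul_succ_self (β j)
  have hV : Vcm σ k = m₀ := by
    refine IsLeast.csInf_eq ⟨(le_Tcm_iff_mul_le hx hk).2 (by omega), fun m hm => ?_⟩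
    have := (le_Tcm_iff_mul_le hx hk).1 hm
    omega
  rw [hV, ← hm₀.trans (two_mul m₀).symm, ← mul_add, hk]
  ring

theorem stmt_3 {n : ℕ} (σ : Fin (n + 1) → ℕ) (hσ : IsChangemaker σ)
    (x : ℕ) (hx : 0 < x) (k : ℕ)
    (hk : k + (∑ i, σ i) = x * ∑ i, (σ i) ^ 2) :
    2 * Vcm σ k + x * (∑ i, σ i) = x ^ 2 * (∑ i, (σ i) ^ 2) :=
  stmt_3_general σ x hx k hk
end

section
/- Let σ = (σ_0,…,σ_n) be a changemaker vector, let x be a positive integer, and let a ≥ 1 and b ≥ 0 be integers. If 2a ≤ x²p + x|σ|₁, T^σ_{a−1} < T^σ_a, and T^σ_b = T^σ_{a−1}, then a − b ≤ x. -/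
open Finset

/-! If `α` attains `T^σ_m` and `2m < x²p + x|σ|₁ = Σ_j xσ_j (xσ_j + 1)`, some coordinate is
deficient, `α_j < xσ_j`; take one with `σ_j` minimal. The changemaker property writes `σ_j - 1`
as a subset sum `Σ_{i∈A} σ_i`, and every `i ∈ A` has `σ_i < σ_j`, so `α_i ≥ xσ_i ≥ 1`. Raising
`α_j` by one and lowering each `α_i`, `i ∈ A`, by one increases `σ·α` by exactly one and the
cost `Σ α_k(α_k + 1)` by at most `2(α_j + 1) - 2x(σ_j - 1) ≤ 2x`. Hence `T^σ_m < T^σ_{m+x}`;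
applied to `m = b` (if `b + x < a`) this contradicts `T^σ_{b+x} ≤ T^σ_{a-1} = T^σ_b`. -/

section Shift

variable {ι : Type*} [Fintype ι] [DecidableEq ι]

lemma sum_mul_add_sum_eq_of_shift {α β : ι → ℕ} (σ : ι → ℕ) {A : Finset ι} {j₀ : ι}
    (h : ∀ j, β j + (if j ∈ A then 1 else 0) = α j + (if j = j₀ then 1 else 0)) :
    ∑ j, σ j * β j + ∑ i ∈ A, σ i = ∑ j, σ j * α j + σ j₀ := by
  have hsum := Finset.sum_congr rfl fun j (_ : j ∈ univ) => congrArg (σ j * ·) (h j)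
  simpa [mul_add, sum_add_distrib] using hsum

lemma sum_mul_succ_add_sum_eq_of_shift {α β : ι → ℕ} {A : Finset ι} {j₀ : ι} (hj₀ : j₀ ∉ A)
    (h : ∀ j, β j + (if j ∈ A then 1 else 0) = α j + (if j = j₀ then 1 else 0)) :
    ∑ j, β j * (β j + 1) + 2 * ∑ i ∈ A, α i = ∑ j, α j * (α j + 1) + 2 * (α j₀ + 1) := by
  have hpt : ∀ j, β j * (β j + 1) + (if j ∈ A then 2 * α j else 0) =
      α j * (α j + 1) + (if j = j₀ then 2 * (α j + 1) else 0) := by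
    intro j
    have hj := h j
    by_cases hA : j ∈ A
    · have hne : j ≠ j₀ := by rintro rfl; exact hj₀ hA
      simp only [hA, hne, if_true, if_false, add_zero] at hj ⊢
      rw [← hj]; ring
    · by_cases he : j = j₀
      · subst he
        simp only [hA, if_true, if_false, add_zero] at hj ⊢
        rw [hj]; ring
      · simp only [hA, he, if_false, add_zero] at hj ⊢
        rw [hj]
  have hsum := Finset.sum_congr rfl fun j (_ : j ∈ univ) => hpt j
  simpa [sum_add_distrib, mul_sum] using hsum

end Shift

section Tcm

variable {n : ℕ} (σ : Fin (n + 1) → ℕ)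

lemma Tcm_bddAbove (m : ℕ) :
    BddAbove {t : ℕ | ∃ α : Fin (n + 1) → ℕ,
      (∑ j, α j * (α j + 1)) ≤ 2 * m ∧ t = ∑ j, σ j * α j} := by
  refine ⟨(∑ j, σ j) * (2 * m), ?_⟩
  rintro t ⟨α, hc, rfl⟩
  rw [sum_mul]
  refine sum_le_sum fun j _ => Nat.mul_le_mul_left _ ?_
  calc α j ≤ α j * (α j + 1) := Nat.le_mul_of_pos_right _ (Nat.succ_pos _)
    _ ≤ ∑ k, α k * (α k + 1) :=
        single_le_sum (f := fun k => α k * (α k + 1)) (fun k _ => Nat.zero_le _) (mem_univ j)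
    _ ≤ 2 * m := hc

lemma exists_Tcm_eq (m : ℕ) :
    ∃ α : Fin (n + 1) → ℕ, (∑ j, α j * (α j + 1)) ≤ 2 * m ∧ Tcm σ m = ∑ j, σ j * α j := by
  refine Nat.sSup_mem ?_ (Tcm_bddAbove σ m)
  exact ⟨0, fun _ => 0, by simp⟩

lemma le_Tcm {m : ℕ} (α : Fin (n + 1) → ℕ) (h : (∑ j, α j * (α j + 1)) ≤ 2 * m) :
    (∑ j, σ j * α j) ≤ Tcm σ m :=
  le_csSup (Tcm_bddAbove σ m) ⟨α, h, rfl⟩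

lemma Tcm_mono : Monotone (Tcm σ) := by
  intro m m' h
  obtain ⟨α, hc, hv⟩ := exists_Tcm_eq σ m
  exact hv ▸ le_Tcm σ α (by omega)

end Tcm

namespace IsChangemaker

variable {n : ℕ} {σ : Fin (n + 1) → ℕ}

lemma exists_deficient_of_cost_lt (hσ : IsChangemaker σ) {x : ℕ} {α : Fin (n + 1) → ℕ}
    (hα : ∑ j, α j * (α j + 1) < ∑ j, x * σ j * (x * σ j + 1)) :
    ∃ j₀ A, j₀ ∉ A ∧ α j₀ < x * σ j₀ ∧ ∑ i ∈ A, σ i + 1 = σ j₀ ∧ ∀ i ∈ A, x * σ i ≤ α i := by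
  set D := univ.filter fun j => α j < x * σ j
  have hD : D.Nonempty := by
    obtain ⟨j, -, hj⟩ := exists_lt_of_sum_lt hα
    refine ⟨j, mem_filter.2 ⟨mem_univ j, ?_⟩⟩
    by_contra! hle
    exact hj.not_ge (Nat.mul_le_mul hle (by omega))
  obtain ⟨j₀, hj₀D, hj₀min⟩ := exists_min_image D σ hD
  obtain ⟨A, hA⟩ := hσ.2 (σ j₀ - 1)
    (le_trans (Nat.sub_le _ _) (single_le_sum (fun i _ => Nat.zero_le _) (mem_univ j₀)))
  have hA_lt : ∀ i ∈ A, σ i < σ j₀ := fun i hi => by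
    have := single_le_sum (fun i _ => Nat.zero_le (σ i)) hi
    have := hσ.1 j₀
    omega
  refine ⟨j₀, A, fun h => (hA_lt j₀ h).false, (mem_filter.1 hj₀D).2,
    by have := hσ.1 j₀; omega, fun i hi => ?_⟩
  by_contra! hlt
  exact (hA_lt i hi).not_ge (hj₀min i (mem_filter.2 ⟨mem_univ i, hlt⟩))

lemma exists_succ_value_of_cost_lt (hσ : IsChangemaker σ) {x : ℕ} (α : Fin (n + 1) → ℕ)
    (hα : ∑ j, α j * (α j + 1) < ∑ j, x * σ j * (x * σ j + 1)) :
    ∃ β : Fin (n + 1) → ℕ, ∑ j, σ j * β j = ∑ j, σ j * α j + 1 ∧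
      ∑ j, β j * (β j + 1) ≤ ∑ j, α j * (α j + 1) + 2 * x := by
  obtain ⟨j₀, A, hj₀A, hj₀, hA, hA_ge⟩ := hσ.exists_deficient_of_cost_lt hα
  have hx : 0 < x := Nat.pos_of_ne_zero (by rintro rfl; simp at hj₀)
  set β : Fin (n + 1) → ℕ :=
    fun j => α j + (if j = j₀ then 1 else 0) - (if j ∈ A then 1 else 0)
  have hshift : ∀ j, β j + (if j ∈ A then 1 else 0) = α j + (if j = j₀ then 1 else 0) := by
    intro j
    by_cases hjA : j ∈ A
    · have hne : j ≠ j₀ := fun h => hj₀A (h ▸ hjA)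
      have := le_trans (Nat.mul_pos hx (hσ.1 j)) (hA_ge j hjA)
      simp only [β, hjA, hne, if_true, if_false]
      omega
    · simp [β, hjA]
  have hval := sum_mul_add_sum_eq_of_shift σ hshift
  have hcost := sum_mul_succ_add_sum_eq_of_shift hj₀A hshift
  have hAα : x * ∑ i ∈ A, σ i ≤ ∑ i ∈ A, α i := mul_sum A σ x ▸ sum_le_sum hA_ge
  have hxσ : x * σ j₀ = x * ∑ i ∈ A, σ i + x := by rw [← hA]; ring
  exact ⟨β, by omega, by omega⟩

lemma Tcm_lt_Tcm_add (hσ : IsChangemaker σ) {x m : ℕ}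
    (hm : 2 * m < x ^ 2 * (∑ i, (σ i) ^ 2) + x * (∑ i, σ i)) :
    Tcm σ m < Tcm σ (m + x) := by
  obtain ⟨α, hc, hv⟩ := exists_Tcm_eq σ m
  have hbound : x ^ 2 * (∑ i, (σ i) ^ 2) + x * (∑ i, σ i) = ∑ j, x * σ j * (x * σ j + 1) := by
    rw [mul_sum, mul_sum, ← sum_add_distrib]
    exact sum_congr rfl fun j _ => by ring
  obtain ⟨β, hβv, hβc⟩ := hσ.exists_succ_value_of_cost_lt (x := x) α (by omega)
  have := le_Tcm σ (m := m + x) β (by omega)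
  omega

end IsChangemaker

theorem stmt_4_general {n : ℕ} (σ : Fin (n + 1) → ℕ) (hσ : IsChangemaker σ)
    (x : ℕ) (a b : ℕ) (ha : 1 ≤ a)
    (h2a : 2 * a ≤ x ^ 2 * (∑ i, (σ i) ^ 2) + x * (∑ i, σ i))
    (hTb : Tcm σ b = Tcm σ (a - 1)) :
    a ≤ b + x := by
  by_contra! h
  have hlt : Tcm σ b < Tcm σ (b + x) := hσ.Tcm_lt_Tcm_add (by omega)
  have hle : Tcm σ (b + x) ≤ Tcm σ (a - 1) := Tcm_mono σ (by omega)
  omega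

theorem stmt_4 {n : ℕ} (σ : Fin (n + 1) → ℕ) (hσ : IsChangemaker σ)
    (x : ℕ) (hx : 0 < x) (a b : ℕ) (ha : 1 ≤ a)
    (h2a : 2 * a ≤ x ^ 2 * (∑ i, (σ i) ^ 2) + x * (∑ i, σ i))
    (hT : Tcm σ (a - 1) < Tcm σ a)
    (hTb : Tcm σ b = Tcm σ (a - 1)) :
    a ≤ b + x :=
  stmt_4_general σ hσ x a b ha h2a hTb
end

section
/- Let σ = (σ_0,…,σ_n) be a changemaker vector, let x be a positive integer, and let a be an integer with 0 < a ≤ xp. Then V^σ_a − V^σ_{a−1} ≤ x. -/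
open Finset

lemma key_step {n : ℕ} (σ : Fin (n + 1) → ℕ) (hσ : IsChangemaker σ)
    (x : ℕ) (hx : 0 < x) (β : Fin (n + 1) → ℕ)
    (hβ : ∑ j, σ j * β j < x * ∑ i, (σ i) ^ 2) :
    ∃ α : Fin (n + 1) → ℕ,
      (∑ j, σ j * α j) = (∑ j, σ j * β j) + 1 ∧
      (∑ j, α j * (α j + 1)) ≤ (∑ j, β j * (β j + 1)) + 2 * x := by
  classical
  set T : Finset (Fin (n+1)) := univ.filter (fun k => β k < x * σ k) with hT
  have hTne : T.Nonempty := by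
    by_contra h
    rw [Finset.not_nonempty_iff_eq_empty, Finset.filter_eq_empty_iff] at h
    have : x * ∑ i, (σ i)^2 ≤ ∑ j, σ j * β j := by
      rw [Finset.mul_sum]
      apply Finset.sum_le_sum
      intro i hi
      have := h hi
      push_neg at this
      nlinarith [this]
    omega
  obtain ⟨js, hjsT, hjmin⟩ := T.exists_min_image σ hTne
  have hjlt : β js < x * σ js := (Finset.mem_filter.mp hjsT).2
  have hσj1 : 1 ≤ σ js := hσ.1 js
  obtain ⟨A, hA⟩ := hσ.2 (σ js - 1)
    (le_trans (Nat.sub_le _ _) (Finset.single_le_sum (fun i _ => Nat.zero_le _) (mem_univ js)))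
  have hAlt : ∀ k ∈ A, σ k < σ js := by
    intro k hk
    have h1 : σ k ≤ σ js - 1 := hA ▸ Finset.single_le_sum (fun i _ => Nat.zero_le _) hk
    omega
  have hAS : ∀ k ∈ A, x * σ k ≤ β k := by
    intro k hk
    by_contra h
    push_neg at h
    have hkT : k ∈ T := Finset.mem_filter.mpr ⟨mem_univ k, h⟩
    exact absurd (hjmin k hkT) (by have := hAlt k hk; omega)
  have hjA : js ∉ A := fun h => lt_irrefl _ (hAlt js h)
  have hβ1 : ∀ k ∈ A, 1 ≤ β k := by
    intro k hk
    have h1 : 1 ≤ x * σ k := Nat.one_le_iff_ne_zero.mpr (Nat.mul_ne_zero (by omega) (by have := hσ.1 k; omega))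
    exact le_trans h1 (hAS k hk)
  set α : Fin (n+1) → ℕ := fun k => if k ∈ A then β k - 1 else if k = js then β k + 1 else β k with hα
  -- pointwise identities in ℤ
  have hval_pt : ∀ j : Fin (n+1), ((σ j : ℤ)) * (α j : ℤ) =
      (σ j : ℤ) * (β j : ℤ) + (if j = js then (σ j : ℤ) else 0)
        - (if j ∈ A then (σ j : ℤ) else 0) := by
    intro j
    by_cases hjA' : j ∈ A
    · have hne : j ≠ js := fun h => hjA (h ▸ hjA')
      have hb := hβ1 j hjA'
      simp only [hα, if_pos hjA', if_neg hne]
      have : ((β j - 1 : ℕ) : ℤ) = (β j : ℤ) - 1 := by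
        rw [Nat.cast_sub hb]; norm_num
      rw [this]; ring
    · by_cases hje : j = js
      · simp only [hα, if_neg hjA', if_pos hje]
        push_cast
        subst hje
        simp [hjA']
        ring
      · simp only [hα, if_neg hjA', if_neg hje]
        simp [hjA', hje]
  have hcost_pt : ∀ j : Fin (n+1), ((α j : ℤ)) * ((α j : ℤ) + 1) =
      (β j : ℤ) * ((β j : ℤ) + 1) + (if j = js then 2 * ((β j : ℤ) + 1) else 0)
        - (if j ∈ A then 2 * (β j : ℤ) else 0) := by
    intro j
    by_cases hjA' : j ∈ A
    · have hne : j ≠ js := fun h => hjA (h ▸ hjA')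
      have hb := hβ1 j hjA'
      simp only [hα, if_pos hjA', if_neg hne]
      have : ((β j - 1 : ℕ) : ℤ) = (β j : ℤ) - 1 := by
        rw [Nat.cast_sub hb]; norm_num
      rw [this]
      simp [hjA', hne]
      ring
    · by_cases hje : j = js
      · simp only [hα, if_neg hjA', if_pos hje]
        push_cast
        simp [hjA', hje]
        ring
      · simp only [hα, if_neg hjA', if_neg hje]
        simp [hjA', hje]
  have hAcast : (∑ k ∈ A, (σ k : ℤ)) = (σ js : ℤ) - 1 := by
    have h' : ((∑ k ∈ A, σ k : ℕ) : ℤ) = ((σ js : ℕ) : ℤ) - 1 := by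
      rw [hA, Nat.cast_sub hσj1]; norm_num
    rw [← h']; push_cast; ring
  have hsum_ite_j : ∀ f : Fin (n+1) → ℤ, (∑ j, if j = js then f j else 0) = f js := by
    intro f
    rw [Finset.sum_ite_eq' univ js f]
    simp
  have hsum_ite_A : ∀ f : Fin (n+1) → ℤ, (∑ j, if j ∈ A then f j else 0) = ∑ j ∈ A, f j := by
    intro f
    rw [← Finset.sum_filter]
    congr 1
    simp [Finset.filter_mem_eq_inter]
  refine ⟨α, ?_, ?_⟩
  · have : ((∑ j, σ j * α j : ℕ) : ℤ) = ((∑ j, σ j * β j : ℕ) : ℤ) + 1 := by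
      push_cast
      rw [Finset.sum_congr rfl (fun j _ => hval_pt j)]
      rw [Finset.sum_sub_distrib, Finset.sum_add_distrib, hsum_ite_j, hsum_ite_A, hAcast]
      ring
    exact_mod_cast this
  · have hkey : (β js : ℤ) + 1 ≤ (∑ k ∈ A, (β k : ℤ)) + x := by
      have h1 : (β js : ℤ) + 1 ≤ x * σ js := by exact_mod_cast hjlt
      have h2 : (x : ℤ) * ((σ js : ℤ) - 1) ≤ ∑ k ∈ A, (β k : ℤ) := by
        rw [← hAcast, Finset.mul_sum]
        apply Finset.sum_le_sum
        intro k hk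
        exact_mod_cast hAS k hk
      nlinarith [h1, h2]
    have : ((∑ j, α j * (α j + 1) : ℕ) : ℤ) ≤ ((∑ j, β j * (β j + 1) : ℕ) : ℤ) + 2 * x := by
      push_cast
      rw [Finset.sum_congr rfl (fun j _ => hcost_pt j)]
      rw [Finset.sum_sub_distrib, Finset.sum_add_distrib, hsum_ite_j, hsum_ite_A]
      have : (∑ j ∈ A, 2 * (β j : ℤ)) = 2 * ∑ j ∈ A, (β j : ℤ) := by rw [Finset.mul_sum]
      rw [this]
      linarith [hkey]
    exact_mod_cast this

theorem stmt_5 {n : ℕ} (σ : Fin (n + 1) → ℕ) (hσ : IsChangemaker σ)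
    (x : ℕ) (hx : 0 < x) (a : ℕ) (ha : 0 < a)
    (hax : a ≤ x * ∑ i, (σ i) ^ 2) :
    Vcm σ a ≤ Vcm σ (a - 1) + x := by
  classical
  -- basic facts about the Tcm defining set
  have hmem0 : ∀ m : ℕ, (0 : ℕ) ∈ {t : ℕ | ∃ α : Fin (n + 1) → ℕ,
      (∑ j, α j * (α j + 1)) ≤ 2 * m ∧ t = ∑ j, σ j * α j} := by
    intro m
    exact ⟨fun _ => 0, by simp, by simp⟩
  have hbdd : ∀ m : ℕ, BddAbove {t : ℕ | ∃ α : Fin (n + 1) → ℕ,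
      (∑ j, α j * (α j + 1)) ≤ 2 * m ∧ t = ∑ j, σ j * α j} := by
    intro m
    refine ⟨(∑ i, σ i) * (2 * m), ?_⟩
    rintro t ⟨α, hc, rfl⟩
    have hbound : ∀ j, α j ≤ 2 * m := by
      intro j
      have h1 : α j * (α j + 1) ≤ 2 * m :=
        le_trans (Finset.single_le_sum (f := fun j => α j * (α j + 1)) (fun i _ => Nat.zero_le _) (mem_univ j)) hc
      nlinarith
    calc ∑ j, σ j * α j ≤ ∑ j, σ j * (2 * m) :=
          Finset.sum_le_sum (fun j _ => Nat.mul_le_mul_left _ (hbound j))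
      _ = (∑ i, σ i) * (2 * m) := by rw [← Finset.sum_mul]
  have hle_T : ∀ m t, (t ∈ {t : ℕ | ∃ α : Fin (n + 1) → ℕ,
      (∑ j, α j * (α j + 1)) ≤ 2 * m ∧ t = ∑ j, σ j * α j}) → t ≤ Tcm σ m :=
    fun m t ht => le_csSup (hbdd m) ht
  have hattain : ∀ m, Tcm σ m ∈ {t : ℕ | ∃ α : Fin (n + 1) → ℕ,
      (∑ j, α j * (α j + 1)) ≤ 2 * m ∧ t = ∑ j, σ j * α j} :=
    fun m => Nat.sSup_mem ⟨0, hmem0 m⟩ (hbdd m)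
  -- Vcm sets are nonempty
  have hVne : ∀ i : ℕ, ∃ m : ℕ, i ≤ Tcm σ m := by
    intro i
    refine ⟨(n + 1) * (i * (i + 1)), ?_⟩
    have hmem : (∑ j, σ j * i) ∈ {t : ℕ | ∃ α : Fin (n + 1) → ℕ,
        (∑ j, α j * (α j + 1)) ≤ 2 * ((n + 1) * (i * (i + 1))) ∧ t = ∑ j, σ j * α j} := by
      refine ⟨fun _ => i, ?_, rfl⟩
      simp [Finset.sum_const]
      ring_nf
      nlinarith
    have h1 : i ≤ ∑ j, σ j * i := by
      calc i ≤ σ 0 * i := Nat.le_mul_of_pos_left i (hσ.1 0)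
      _ ≤ ∑ j, σ j * i := Finset.single_le_sum (f := fun j => σ j * i) (fun i _ => Nat.zero_le _) (mem_univ 0)
    exact le_trans h1 (hle_T _ _ hmem)
  set m := Vcm σ (a - 1) with hm
  have hmmem : a - 1 ≤ Tcm σ m := Nat.sInf_mem (hVne (a - 1))
  obtain ⟨β, hβc, hβv⟩ := hattain m
  by_cases hcase : a ≤ Tcm σ m
  · -- Tcm is monotone: the same β works at m + x
    have h1 : Tcm σ m ≤ Tcm σ (m + x) := by
      apply hle_T
      exact ⟨β, by omega, hβv⟩
    exact Nat.sInf_le (le_trans hcase h1)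
  · push_neg at hcase
    have hTval : Tcm σ m = a - 1 := le_antisymm (by omega) hmmem
    have hβval : ∑ j, σ j * β j = a - 1 := by omega
    have hlt : ∑ j, σ j * β j < x * ∑ i, (σ i) ^ 2 := by omega
    obtain ⟨γ, hγv, hγc⟩ := key_step σ hσ x hx β hlt
    have hγa : ∑ j, σ j * γ j = a := by omega
    have : a ≤ Tcm σ (m + x) := by
      apply hle_T
      exact ⟨γ, by omega, hγa.symm⟩
    exact Nat.sInf_le this
end

section
/- Let σ = (σ_0,…,σ_n) be a changemaker vector, let x be a positive integer, and let a ≥ 1 and b ≥ 0 be integers. If 2a > x²p − x|σ|₁, T^σ_a > T^σ_{a−1}, and T^σ_a − T^σ_b ≥ 2, then a − b ≥ x + 1. -/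
open Finset

lemma tcm_bdd {n : ℕ} (σ : Fin (n + 1) → ℕ) (m : ℕ) :
    BddAbove {t : ℕ | ∃ α : Fin (n + 1) → ℕ,
      (∑ j, α j * (α j + 1)) ≤ 2 * m ∧ t = ∑ j, σ j * α j} := by
  refine ⟨∑ j, σ j * (2 * m), ?_⟩
  rintro t ⟨α, hα, rfl⟩
  apply Finset.sum_le_sum
  intro j _
  have h2 : α j * (α j + 1) ≤ 2 * m :=
    le_trans (Finset.single_le_sum (f := fun i => α i * (α i + 1))
      (fun i _ => Nat.zero_le _) (Finset.mem_univ j)) hα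
  have h1 : α j ≤ 2 * m := by nlinarith
  exact Nat.mul_le_mul_left _ h1

lemma tcm_le {n : ℕ} (σ : Fin (n + 1) → ℕ) (m : ℕ) (α : Fin (n + 1) → ℕ)
    (h : (∑ j, α j * (α j + 1)) ≤ 2 * m) : (∑ j, σ j * α j) ≤ Tcm σ m :=
  le_csSup (tcm_bdd σ m) ⟨α, h, rfl⟩

lemma tcm_mem {n : ℕ} (σ : Fin (n + 1) → ℕ) (m : ℕ) :
    ∃ α : Fin (n + 1) → ℕ, (∑ j, α j * (α j + 1)) ≤ 2 * m ∧ Tcm σ m = ∑ j, σ j * α j := by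
  have h : Tcm σ m ∈ {t : ℕ | ∃ α : Fin (n + 1) → ℕ,
      (∑ j, α j * (α j + 1)) ≤ 2 * m ∧ t = ∑ j, σ j * α j} :=
    Nat.sSup_mem ⟨0, (fun _ => 0 : Fin (n + 1) → ℕ), by simp, by simp⟩ (tcm_bdd σ m)
  exact h

theorem stmt_6 {n : ℕ} (σ : Fin (n + 1) → ℕ) (hσ : IsChangemaker σ)
    (x : ℕ) (hx : 0 < x) (a b : ℕ) (ha : 1 ≤ a)
    (h2a : x ^ 2 * (∑ i, (σ i) ^ 2) < 2 * a + x * (∑ i, σ i))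
    (hT : Tcm σ (a - 1) < Tcm σ a)
    (hTab : Tcm σ b + 2 ≤ Tcm σ a) :
    b + (x + 1) ≤ a := by
  by_contra hcon
  push_neg at hcon
  have hcon' : a ≤ b + x := by omega
  obtain ⟨hpos, hcm⟩ := hσ
  obtain ⟨α, hαw, hαv⟩ := tcm_mem σ a
  -- the weight of α is exactly 2a
  have heven : 2 ∣ ∑ j, α j * (α j + 1) :=
    Finset.dvd_sum fun i _ => (Nat.even_mul_succ_self (α i)).two_dvd
  have hw2a : ∑ j, α j * (α j + 1) = 2 * a := by
    by_contra h
    obtain ⟨c, hc⟩ := heven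
    have hlt : ∑ j, α j * (α j + 1) ≤ 2 * (a - 1) := by omega
    have := tcm_le σ (a - 1) α hlt
    omega
  -- there is a coordinate with α j ≥ x * σ j
  have hP : ∃ j, x * σ j ≤ α j := by
    by_contra h
    push_neg at h
    have hle : ∀ j ∈ (univ : Finset (Fin (n + 1))),
        α j * (α j + 1) + x * σ j ≤ x ^ 2 * (σ j) ^ 2 := by
      intro j _
      have h1 : α j + 1 ≤ x * σ j := h j
      calc α j * (α j + 1) + x * σ j ≤ α j * (x * σ j) + x * σ j := by
            exact Nat.add_le_add_right (Nat.mul_le_mul_left _ h1) _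
        _ = (α j + 1) * (x * σ j) := by ring
        _ ≤ (x * σ j) * (x * σ j) := Nat.mul_le_mul_right _ h1
        _ = x ^ 2 * (σ j) ^ 2 := by ring
    have hsum := Finset.sum_le_sum hle
    rw [Finset.sum_add_distrib] at hsum
    have e1 : ∑ j, x * σ j = x * ∑ j, σ j := by rw [Finset.mul_sum]
    have e2 : ∑ j, x ^ 2 * (σ j) ^ 2 = x ^ 2 * ∑ j, (σ j) ^ 2 := by rw [Finset.mul_sum]
    rw [e1, e2, hw2a] at hsum
    omega
  -- pick j₀ with α j₀ ≥ x σ j₀ and σ j₀ minimal among such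
  obtain ⟨j₀, hj₀mem, hj₀min⟩ := Finset.exists_min_image
      (univ.filter (fun j => x * σ j ≤ α j)) σ
      (by obtain ⟨j, hj⟩ := hP; exact ⟨j, by simp [hj]⟩)
  simp only [Finset.mem_filter, Finset.mem_univ, true_and] at hj₀mem
  have hαj₀ : x * σ j₀ ≤ α j₀ := hj₀mem
  obtain ⟨c, hc⟩ : ∃ c, σ j₀ = c + 1 := ⟨σ j₀ - 1, by have := hpos j₀; omega⟩
  -- changemaker subset summing to σ j₀ - 1 = c
  obtain ⟨A, hA⟩ := hcm c (by
    have h1 : σ j₀ ≤ ∑ i, σ i :=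
      Finset.single_le_sum (fun i _ => Nat.zero_le _) (Finset.mem_univ j₀)
    omega)
  have hj₀A : j₀ ∉ A := by
    intro hmem
    have h1 : σ j₀ ≤ ∑ i ∈ A, σ i :=
      Finset.single_le_sum (fun i _ => Nat.zero_le _) hmem
    omega
  have hAsmall : ∀ i ∈ A, α i + 1 ≤ x * σ i := by
    intro i hi
    by_contra h
    push_neg at h
    have hiP : i ∈ univ.filter (fun j => x * σ j ≤ α j) := by
      simp only [Finset.mem_filter, Finset.mem_univ, true_and]; omega
    have h2 := hj₀min i hiP
    have h3 : σ i ≤ ∑ i ∈ A, σ i :=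
      Finset.single_le_sum (fun i _ => Nat.zero_le _) hi
    omega
  -- the modified vector β
  set β : Fin (n + 1) → ℕ :=
    fun i => if i = j₀ then α j₀ - 1 else if i ∈ A then α i + 1 else α i with hβ
  have hα₀pos : 1 ≤ α j₀ := le_trans (by have := hpos j₀; nlinarith) hαj₀
  have hβj₀ : β j₀ = α j₀ - 1 := by simp [hβ]
  have hβA : ∀ i ∈ A, β i = α i + 1 := by
    intro i hi
    have hne : i ≠ j₀ := fun h => hj₀A (h ▸ hi)
    simp [hβ, hne, hi]
  have hsplit : ∀ g : Fin (n + 1) → ℕ,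
      ∑ j, g j = g j₀ + ∑ i ∈ A, g i + ∑ i ∈ univ \ insert j₀ A, g i := by
    intro g
    rw [← Finset.sum_sdiff (Finset.subset_univ (insert j₀ A)), Finset.sum_insert hj₀A]
    ring
  have hrestmem : ∀ i ∈ univ \ insert j₀ A, β i = α i := by
    intro i hi
    simp only [Finset.mem_sdiff, Finset.mem_insert, not_or] at hi
    simp [hβ, hi.2.1, hi.2.2]
  -- value of β
  have hj0val : σ j₀ * β j₀ + σ j₀ = σ j₀ * α j₀ := by
    rw [hβj₀]
    obtain ⟨d, hd⟩ : ∃ d, α j₀ = d + 1 := ⟨α j₀ - 1, by omega⟩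
    rw [hd]
    simp [Nat.mul_succ]
  have hAval : ∑ i ∈ A, σ i * β i = ∑ i ∈ A, σ i * α i + c := by
    rw [← hA, ← Finset.sum_add_distrib]
    apply Finset.sum_congr rfl
    intro i hi
    rw [hβA i hi]
    ring
  have hrestval : ∑ i ∈ univ \ insert j₀ A, σ i * β i
      = ∑ i ∈ univ \ insert j₀ A, σ i * α i :=
    Finset.sum_congr rfl fun i hi => by rw [hrestmem i hi]
  have hval : ∑ j, σ j * β j + 1 = ∑ j, σ j * α j := by
    rw [hsplit (fun j => σ j * β j), hsplit (fun j => σ j * α j), hAval, hrestval]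
    omega
  -- weight of β
  have hj0wt : β j₀ * (β j₀ + 1) + 2 * α j₀ = α j₀ * (α j₀ + 1) := by
    rw [hβj₀]
    obtain ⟨d, hd⟩ : ∃ d, α j₀ = d + 1 := ⟨α j₀ - 1, by omega⟩
    rw [hd]
    simp only [Nat.add_sub_cancel]
    ring
  have hAwt : ∑ i ∈ A, β i * (β i + 1)
      = ∑ i ∈ A, α i * (α i + 1) + 2 * ∑ i ∈ A, (α i + 1) := by
    rw [Finset.mul_sum, ← Finset.sum_add_distrib]
    apply Finset.sum_congr rfl
    intro i hi
    rw [hβA i hi]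
    ring
  have hrestwt : ∑ i ∈ univ \ insert j₀ A, β i * (β i + 1)
      = ∑ i ∈ univ \ insert j₀ A, α i * (α i + 1) :=
    Finset.sum_congr rfl fun i hi => by rw [hrestmem i hi]
  have hAbound : ∑ i ∈ A, (α i + 1) ≤ x * c := by
    calc ∑ i ∈ A, (α i + 1) ≤ ∑ i ∈ A, x * σ i := Finset.sum_le_sum hAsmall
      _ = x * ∑ i ∈ A, σ i := by rw [Finset.mul_sum]
      _ = x * c := by rw [hA]
  have hαj₀' : x * c + x ≤ α j₀ := by
    calc x * c + x = x * σ j₀ := by rw [hc]; ring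
      _ ≤ α j₀ := hαj₀
  have hwt : ∑ j, β j * (β j + 1) ≤ 2 * b := by
    have h1 := hsplit (fun j => β j * (β j + 1))
    have h2 := hsplit (fun j => α j * (α j + 1))
    simp only at h1 h2
    rw [hAwt, hrestwt] at h1
    omega
  have hfin := tcm_le σ b β hwt
  omega
end

section
/- Let σ = (σ_0,…,σ_n) be a changemaker vector, let x be a positive integer, and let k be an integer with 0 ≤ k < p. If V^σ_k = V^σ_{k+1}, then V^σ_{xp+k+1} − V^σ_{xp+k} = x. -/
open Finset

/-!
Write `C(i)` for the least value of `Σ_j α_j (α_j + 1)` over `α ≥ 0` with `σ·α ≥ i`; then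
`2 V_i = C(i)`. The translation `α ↦ α + σ` shows `C(i + p) = C(i) + 2i + Σ_j σ_j (σ_j + 1)`:
for `≤`, an optimal `α` overshoots `i` by less than some `σ_j ≤ |σ|₁`, and the changemaker property
lets us shave exactly that overshoot off `α + σ` by lowering a set of coordinates by one; for `≥`,
`max(γ, σ) - σ` undoes the translation. Hence each shift by `p` adds exactly one to every increment
`V_{i+1} - V_i`, and `V_k = V_{k+1}` gives the claim by induction on `x`.
-/

theorem Fintype.sum_update_add {ι M : Type*} [Fintype ι] [DecidableEq ι] [AddCommMonoid M]
    (g : ι → M) (j : ι) (b : M) : ∑ k, Function.update g j b k + g j = ∑ k, g k + b := by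
  rw [sum_update_of_mem (mem_univ j), sum_eq_add_sum_sdiff_singleton_of_mem (mem_univ j) g]
  abel

namespace Changemaker

variable {ι : Type*} [Fintype ι]

/-- `cost α ≤ 2 * m` is the constraint cutting out `S_{≤m}`. -/
def cost (α : ι → ℕ) : ℕ := ∑ j, α j * (α j + 1)

noncomputable def minCost (σ : ι → ℕ) (i : ℕ) : ℕ := sInf (cost '' {α | i ≤ σ ⬝ᵥ α})

lemma le_cost (α : ι → ℕ) (j : ι) : α j ≤ cost α :=
  (Nat.le_mul_of_pos_right _ (α j).succ_pos).trans <|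
    single_le_sum (f := fun j => α j * (α j + 1)) (fun _ _ => Nat.zero_le _) (mem_univ j)

lemma even_cost (α : ι → ℕ) : Even (cost α) :=
  even_sum _ fun j _ => Nat.even_mul_succ_self (α j)

lemma cost_update_pred_add [DecidableEq ι] {α : ι → ℕ} {j : ι} (hj : 0 < α j) :
    cost (Function.update α j (α j - 1)) + 2 * α j = cost α := by
  have h := Fintype.sum_update_add (fun k => α k * (α k + 1)) j ((α j - 1) * (α j - 1 + 1))
  simp only [← Function.apply_update (fun _ x => x * (x + 1))] at h
  obtain ⟨a, ha⟩ : ∃ a, α j = a + 1 := ⟨α j - 1, by omega⟩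
  rw [ha, Nat.add_sub_cancel] at h ⊢
  unfold cost
  nlinarith

lemma dotProduct_update_pred_add [DecidableEq ι] (σ : ι → ℕ) {α : ι → ℕ} {j : ι}
    (hj : 0 < α j) : σ ⬝ᵥ Function.update α j (α j - 1) + σ j = σ ⬝ᵥ α := by
  have h := Fintype.sum_update_add (fun k => σ k * α k) j (σ j * (α j - 1))
  simp only [← Function.apply_update (fun k x => σ k * x)] at h
  obtain ⟨a, ha⟩ : ∃ a, α j = a + 1 := ⟨α j - 1, by omega⟩
  rw [ha, Nat.add_sub_cancel] at h ⊢
  unfold dotProduct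
  nlinarith

variable {σ : ι → ℕ}

lemma minCost_le {i : ℕ} {α : ι → ℕ} (h : i ≤ σ ⬝ᵥ α) : minCost σ i ≤ cost α :=
  Nat.sInf_le ⟨α, h, rfl⟩

lemma exists_cost_eq_minCost (hσ : σ ≠ 0) (i : ℕ) :
    ∃ α, i ≤ σ ⬝ᵥ α ∧ cost α = minCost σ i := by
  obtain ⟨j, hj⟩ := Function.ne_iff.mp hσ
  have hi : i ≤ σ ⬝ᵥ fun _ => i :=
    calc i ≤ σ j * i := Nat.le_mul_of_pos_left i (Nat.pos_of_ne_zero hj)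
      _ ≤ σ ⬝ᵥ fun _ => i :=
        single_le_sum (f := fun k => σ k * i) (fun _ _ => Nat.zero_le _) (mem_univ j)
  exact Nat.sInf_mem ⟨_, Set.mem_image_of_mem cost (show _ ∈ {α | i ≤ σ ⬝ᵥ α} from hi)⟩

lemma even_minCost (hσ : σ ≠ 0) (i : ℕ) : Even (minCost σ i) := by
  obtain ⟨α, -, hα⟩ := exists_cost_eq_minCost hσ i
  exact hα ▸ even_cost α

/-- Lowering a positive coordinate of an optimal `α` saves cost, so it must lose the target. -/
lemma dotProduct_lt_of_cost_eq_minCost {i : ℕ} {α : ι → ℕ} (hα : cost α = minCost σ i)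
    {j : ι} (hj : 0 < α j) : σ ⬝ᵥ α < i + σ j := by
  classical
  by_contra! h
  have hdot := dotProduct_update_pred_add σ hj
  have hcost := cost_update_pred_add hj
  have := minCost_le (σ := σ) (i := i) (α := Function.update α j (α j - 1)) (by omega)
  omega

lemma exists_cost_eq_minCost_dotProduct_le (hσ : σ ≠ 0) (i : ℕ) :
    ∃ α, i ≤ σ ⬝ᵥ α ∧ σ ⬝ᵥ α ≤ i + ∑ j, σ j ∧ cost α = minCost σ i := by
  obtain ⟨α, hi, hα⟩ := exists_cost_eq_minCost hσ i
  refine ⟨α, hi, ?_, hα⟩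
  by_cases hle : σ ⬝ᵥ α ≤ i
  · omega
  obtain ⟨j, -, hj⟩ := exists_ne_zero_of_sum_ne_zero (s := univ) (f := fun k => σ k * α k)
    (show σ ⬝ᵥ α ≠ 0 by omega)
  have hlt := dotProduct_lt_of_cost_eq_minCost hα (Nat.pos_of_ne_zero (right_ne_zero_of_mul hj))
  have := single_le_sum (f := σ) (fun _ _ => Nat.zero_le _) (mem_univ j)
  omega

/-- From an optimal `α` for `i`, overshooting `i` by `s ≤ ∑ σ`, pass to `α + σ - 1_A` where
`σ(A) = s`: removing `1_A` saves at least `2 s` in cost and loses exactly `s` in `σ ⬝ᵥ ·`. -/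
lemma minCost_add_dotProduct_self_le (hσ : σ ≠ 0)
    (hsub : ∀ k : ℕ, k ≤ ∑ j, σ j → ∃ A : Finset ι, ∑ j ∈ A, σ j = k) (i : ℕ) :
    minCost σ (i + σ ⬝ᵥ σ) ≤ minCost σ i + 2 * i + cost σ := by
  classical
  obtain ⟨α, hlo, hhi, hα⟩ := exists_cost_eq_minCost_dotProduct_le hσ i
  obtain ⟨A, hA⟩ := hsub (σ ⬝ᵥ α - i) (by omega)
  set b : ι → ℕ := fun j => if j ∈ A then 1 else 0
  set γ : ι → ℕ := fun j => α j + σ j - b j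
  have hb : σ ⬝ᵥ b = σ ⬝ᵥ α - i := by
    simp only [dotProduct, b, mul_ite, mul_one, mul_zero, sum_ite_mem, univ_inter, hA]
  have hb_le : ∀ j, b j ≤ 1 := fun j => by by_cases hj : j ∈ A <;> simp [b, hj]
  have hdot : σ ⬝ᵥ γ + σ ⬝ᵥ b = σ ⬝ᵥ α + σ ⬝ᵥ σ := by
    simp only [dotProduct, ← sum_add_distrib]
    refine sum_congr rfl fun j _ => ?_
    rcases Nat.eq_zero_or_pos (σ j) with h | h
    · simp [h]
    · rw [← mul_add, ← mul_add, Nat.sub_add_cancel (by have := hb_le j; omega)]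
  have hterm : ∀ a c e : ℕ, e ≤ 1 →
      (a + c - e) * (a + c - e + 1) + 2 * (c * e) ≤ a * (a + 1) + 2 * (c * a) + c * (c + 1) := by
    intro a c e he
    rcases Nat.le_one_iff_eq_zero_or_eq_one.mp he with rfl | rfl
    · simp only [Nat.sub_zero]; nlinarith
    · rcases Nat.eq_zero_or_pos (a + c) with h0 | h0
      · simp [show a = 0 by omega, show c = 0 by omega]
      · obtain ⟨d, hd⟩ : ∃ d, a + c = d + 1 := ⟨a + c - 1, by omega⟩
        rw [hd, Nat.add_sub_cancel]
        nlinarith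
  have hcost : cost γ + 2 * (σ ⬝ᵥ b) ≤ cost α + 2 * (σ ⬝ᵥ α) + cost σ := by
    simp only [cost, dotProduct, mul_sum, ← sum_add_distrib]
    exact sum_le_sum fun j _ => hterm (α j) (σ j) (b j) (hb_le j)
  have := minCost_le (σ := σ) (show i + σ ⬝ᵥ σ ≤ σ ⬝ᵥ γ by omega)
  omega

/-- Dually, from an optimal `γ` for `i + σ ⬝ᵥ σ`, the vector `max γ σ - σ` reaches `i` cheaply. -/
lemma le_minCost_add_dotProduct_self (hσ : σ ≠ 0) (i : ℕ) :
    minCost σ i + 2 * i + cost σ ≤ minCost σ (i + σ ⬝ᵥ σ) := by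
  obtain ⟨γ, hi, hγ⟩ := exists_cost_eq_minCost hσ (i + σ ⬝ᵥ σ)
  set δ : ι → ℕ := fun j => max (γ j) (σ j) - σ j
  have hdot : σ ⬝ᵥ γ ≤ σ ⬝ᵥ δ + σ ⬝ᵥ σ := by
    simp only [dotProduct, ← sum_add_distrib, ← mul_add]
    exact sum_le_sum fun j _ => Nat.mul_le_mul_left _ (by simp only [δ]; omega)
  have hterm : ∀ g c : ℕ,
      (max g c - c) * (max g c - c + 1) + c * (c + 1) + 2 * (c * g) ≤ g * (g + 1) + 2 * (c * c) := by
    intro g c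
    rcases le_total c g with h | h
    · obtain ⟨d, rfl⟩ := Nat.exists_eq_add_of_le h
      rw [max_eq_left h, Nat.add_sub_cancel_left]
      nlinarith
    · obtain ⟨d, rfl⟩ := Nat.exists_eq_add_of_le h
      rw [max_eq_right h, Nat.sub_self]
      nlinarith [Nat.le_mul_self d]
  have hcost : cost δ + cost σ + 2 * (σ ⬝ᵥ γ) ≤ cost γ + 2 * (σ ⬝ᵥ σ) := by
    simp only [cost, dotProduct, mul_sum, ← sum_add_distrib]
    exact sum_le_sum fun j _ => hterm (γ j) (σ j)
  have := minCost_le (σ := σ) (show i ≤ σ ⬝ᵥ δ by omega)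
  omega

lemma minCost_add_dotProduct_self (hσ : σ ≠ 0)
    (hsub : ∀ k : ℕ, k ≤ ∑ j, σ j → ∃ A : Finset ι, ∑ j ∈ A, σ j = k) (i : ℕ) :
    minCost σ (i + σ ⬝ᵥ σ) = minCost σ i + 2 * i + cost σ :=
  le_antisymm (minCost_add_dotProduct_self_le hσ hsub i) (le_minCost_add_dotProduct_self hσ i)

section Vcm

variable {n : ℕ} {σ : Fin (n + 1) → ℕ}

lemma le_Tcm_iff (i m : ℕ) : i ≤ Tcm σ m ↔ ∃ α, cost α ≤ 2 * m ∧ i ≤ σ ⬝ᵥ α := by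
  set S : Set ℕ := {t | ∃ α : Fin (n + 1) → ℕ, cost α ≤ 2 * m ∧ t = σ ⬝ᵥ α}
  have hne : S.Nonempty := ⟨0, 0, by simp [cost], by simp⟩
  have hbdd : BddAbove S := by
    refine ⟨(∑ j, σ j) * (2 * m), ?_⟩
    rintro t ⟨α, hα, rfl⟩
    rw [sum_mul]
    exact sum_le_sum fun j _ => Nat.mul_le_mul_left _ ((le_cost α j).trans hα)
  change i ≤ sSup S ↔ _
  constructor
  · intro hi
    obtain ⟨α, hα, ht⟩ := Nat.sSup_mem hne hbdd
    exact ⟨α, hα, ht ▸ hi⟩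
  · rintro ⟨α, hα, hi⟩
    exact hi.trans (le_csSup hbdd ⟨α, hα, rfl⟩)

lemma two_mul_Vcm (hσ : σ ≠ 0) (i : ℕ) : 2 * Vcm σ i = minCost σ i := by
  have hiff : ∀ m, i ≤ Tcm σ m ↔ minCost σ i ≤ 2 * m := fun m => by
    rw [le_Tcm_iff]
    constructor
    · rintro ⟨α, hα, hi⟩
      exact (minCost_le hi).trans hα
    · intro hm
      obtain ⟨α, hi, hα⟩ := exists_cost_eq_minCost hσ i
      exact ⟨α, hα ▸ hm, hi⟩
  obtain ⟨c, hc⟩ := even_minCost hσ i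
  have hset : {m | i ≤ Tcm σ m} = Set.Ici c := by
    ext m
    rw [Set.mem_Ici, ← Nat.mul_le_mul_left_iff two_pos, two_mul, ← hc]
    exact hiff m
  rw [Vcm, hset, csInf_Ici, hc, two_mul]

/-- `V(i + 1 + p) - V(i + p) = V(i + 1) - V(i) + 1`, written without truncated subtraction. -/
lemma Vcm_succ_add_dotProduct_self (hσ : IsChangemaker σ) (i : ℕ) :
    Vcm σ (i + 1 + σ ⬝ᵥ σ) + Vcm σ i = Vcm σ (i + σ ⬝ᵥ σ) + Vcm σ (i + 1) + 1 := by
  have hσ0 : σ ≠ 0 := fun h => (hσ.1 0).ne' (congrFun h 0)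
  have hV : ∀ i, 2 * Vcm σ (i + σ ⬝ᵥ σ) = 2 * Vcm σ i + 2 * i + cost σ := fun i => by
    rw [two_mul_Vcm hσ0, two_mul_Vcm hσ0, minCost_add_dotProduct_self hσ0 hσ.2]
  have h₀ := hV i
  have h₁ := hV (i + 1)
  omega

end Vcm

end Changemaker

theorem stmt_8_general {n : ℕ} (σ : Fin (n + 1) → ℕ) (hσ : IsChangemaker σ)
    (x : ℕ) (k : ℕ)
    (hV : Vcm σ k = Vcm σ (k + 1)) :
    Vcm σ (x * (∑ i, (σ i) ^ 2) + k + 1) =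
      Vcm σ (x * (∑ i, (σ i) ^ 2) + k) + x := by
  have hp : ∑ i, σ i ^ 2 = σ ⬝ᵥ σ := sum_congr rfl fun i _ => sq (σ i)
  rw [hp]
  induction x with
  | zero => simpa using hV.symm
  | succ x ih =>
    have hstep := Changemaker.Vcm_succ_add_dotProduct_self hσ (x * (σ ⬝ᵥ σ) + k)
    rw [add_right_comm _ 1, add_right_comm _ k] at hstep
    rw [add_mul, one_mul]
    omega

theorem stmt_8 {n : ℕ} (σ : Fin (n + 1) → ℕ) (hσ : IsChangemaker σ)
    (x : ℕ) (hx : 0 < x) (k : ℕ) (hk : k < ∑ i, (σ i) ^ 2)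
    (hV : Vcm σ k = Vcm σ (k + 1)) :
    Vcm σ (x * (∑ i, (σ i) ^ 2) + k + 1) =
      Vcm σ (x * (∑ i, (σ i) ^ 2) + k) + x :=
  stmt_8_general σ hσ x k hV
end

section
/- Let σ = (σ_0,…,σ_n) be a changemaker vector, let x be a positive integer, and let k be an integer with 0 ≤ k < p. Then 2·V^σ_{xp+k} = x²p + x|σ|₁ + 2xk + 2·V^σ_k. -/
open Finset

namespace CMaux

variable {n : ℕ}

/-- dot product -/
def dotp (σ α : Fin (n + 1) → ℕ) : ℕ := ∑ j, σ j * α j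

/-- the quadratic form `Σ α_j (α_j + 1)` -/
def gQ (α : Fin (n + 1) → ℕ) : ℕ := ∑ j, α j * (α j + 1)

/-- `fcm σ i = min { gQ α : σ·α ≥ i }` -/
noncomputable def fcm (σ : Fin (n + 1) → ℕ) (i : ℕ) : ℕ :=
  sInf {g : ℕ | ∃ α : Fin (n + 1) → ℕ, i ≤ dotp σ α ∧ g = gQ α}

lemma fcm_le (σ : Fin (n + 1) → ℕ) {i : ℕ} {α : Fin (n + 1) → ℕ}
    (h : i ≤ dotp σ α) : fcm σ i ≤ gQ α :=
  Nat.sInf_le ⟨α, h, rfl⟩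

lemma fset_nonempty (σ : Fin (n + 1) → ℕ) (h1 : 1 ≤ ∑ j, σ j) (i : ℕ) :
    {g : ℕ | ∃ α : Fin (n + 1) → ℕ, i ≤ dotp σ α ∧ g = gQ α}.Nonempty := by
  refine ⟨gQ (fun _ => i), fun _ => i, ?_, rfl⟩
  have : dotp σ (fun _ => i) = (∑ j, σ j) * i := by
    simp [dotp, Finset.sum_mul]
  rw [this]
  calc i = 1 * i := (one_mul i).symm
    _ ≤ (∑ j, σ j) * i := Nat.mul_le_mul_right i h1

lemma fcm_spec (σ : Fin (n + 1) → ℕ) (h1 : 1 ≤ ∑ j, σ j) (i : ℕ) :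
    ∃ α : Fin (n + 1) → ℕ, i ≤ dotp σ α ∧ gQ α = fcm σ i := by
  obtain ⟨α, hα, he⟩ := Nat.sInf_mem (fset_nonempty σ h1 i)
  exact ⟨α, hα, he.symm⟩

lemma two_dvd_gQ (α : Fin (n + 1) → ℕ) : 2 ∣ gQ α := by
  refine Finset.dvd_sum fun j _ => ?_
  rcases Nat.even_mul_succ_self (α j) with ⟨c, hc⟩
  exact ⟨c, by omega⟩

lemma two_dvd_fcm (σ : Fin (n + 1) → ℕ) (h1 : 1 ≤ ∑ j, σ j) (i : ℕ) :
    2 ∣ fcm σ i := by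
  obtain ⟨α, _, he⟩ := fcm_spec σ h1 i
  exact he ▸ two_dvd_gQ α

lemma bddAbove_S (σ : Fin (n + 1) → ℕ) (m : ℕ) :
    BddAbove {t : ℕ | ∃ α : Fin (n + 1) → ℕ,
      (∑ j, α j * (α j + 1)) ≤ 2 * m ∧ t = ∑ j, σ j * α j} := by
  refine ⟨(∑ j, σ j) * (2 * m), ?_⟩
  rintro t ⟨α, hg, rfl⟩
  have hb : ∀ j, α j ≤ 2 * m := by
    intro j
    have h1 : α j ≤ α j * (α j + 1) := Nat.le_mul_of_pos_right _ (Nat.succ_pos _)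
    have h2 : α j * (α j + 1) ≤ ∑ j', α j' * (α j' + 1) :=
      Finset.single_le_sum (f := fun j' => α j' * (α j' + 1))
        (fun j' _ => Nat.zero_le _) (mem_univ j)
    omega
  calc ∑ j, σ j * α j ≤ ∑ j, σ j * (2 * m) :=
        Finset.sum_le_sum fun j _ => Nat.mul_le_mul_left _ (hb j)
    _ = (∑ j, σ j) * (2 * m) := by rw [Finset.sum_mul]

lemma le_Tcm_iff (σ : Fin (n + 1) → ℕ) (h1 : 1 ≤ ∑ j, σ j) (i m : ℕ) :
    i ≤ Tcm σ m ↔ fcm σ i ≤ 2 * m := by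
  constructor
  · intro h
    have hne : {t : ℕ | ∃ α : Fin (n + 1) → ℕ,
        (∑ j, α j * (α j + 1)) ≤ 2 * m ∧ t = ∑ j, σ j * α j}.Nonempty :=
      ⟨0, fun _ => 0, by simp, by simp⟩
    obtain ⟨α, hg, ht⟩ := Nat.sSup_mem hne (bddAbove_S σ m)
    have : i ≤ dotp σ α := by
      unfold Tcm at h; rw [dotp, ← ht]; exact h
    exact le_trans (fcm_le σ this) hg
  · intro h
    obtain ⟨α, hi, he⟩ := fcm_spec σ h1 i
    have hg : (∑ j, α j * (α j + 1)) ≤ 2 * m := by rw [← gQ]; omega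
    have hmem : dotp σ α ∈ {t : ℕ | ∃ α : Fin (n + 1) → ℕ,
        (∑ j, α j * (α j + 1)) ≤ 2 * m ∧ t = ∑ j, σ j * α j} := ⟨α, hg, rfl⟩
    exact le_trans hi (le_csSup (bddAbove_S σ m) hmem)

lemma two_Vcm (σ : Fin (n + 1) → ℕ) (h1 : 1 ≤ ∑ j, σ j) (i : ℕ) :
    2 * Vcm σ i = fcm σ i := by
  obtain ⟨q, hq⟩ := two_dvd_fcm σ h1 i
  have hset : {m : ℕ | i ≤ Tcm σ m} = {m : ℕ | q ≤ m} := by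
    ext m
    simp only [Set.mem_setOf_eq, le_Tcm_iff σ h1, hq]
    omega
  have : Vcm σ i = q := by
    rw [Vcm, hset]
    exact le_antisymm (Nat.sInf_le (le_refl q)) (le_csInf ⟨q, le_refl q⟩ fun b hb => hb)
  omega

/-- the reflection direction: `f(i) + 2i + p + |σ|₁ ≤ f(i+p)` -/
lemma step_ge (σ : Fin (n + 1) → ℕ) (h1 : 1 ≤ ∑ j, σ j) (i : ℕ) :
    fcm σ i + 2 * i + (∑ j, σ j * σ j) + (∑ j, σ j) ≤ fcm σ (i + ∑ j, σ j * σ j) := by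
  set p := ∑ j, σ j * σ j with hp
  obtain ⟨β, hβi, hβg⟩ := fcm_spec σ h1 (i + p)
  set α : Fin (n + 1) → ℕ := fun j => if σ j ≤ β j then β j - σ j else σ j - 1 - β j with hα
  have key : ∀ j, α j * (α j + 1) + (2 * (σ j * β j) + σ j) = β j * (β j + 1) + σ j * σ j := by
    intro j
    rcases le_or_gt (σ j) (β j) with h | h
    · obtain ⟨e, he⟩ := Nat.exists_eq_add_of_le h
      have ha : α j = e := by simp only [hα, if_pos h]; omega
      rw [ha, he]; ring
    · have h' : β j + 1 ≤ σ j := h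
      obtain ⟨e, he⟩ := Nat.exists_eq_add_of_le h'
      have ha : α j = e := by simp only [hα, if_neg (not_le_of_gt h)]; omega
      rw [ha, he]; ring
  have hdot : ∀ j, σ j * β j ≤ σ j * α j + σ j * σ j := by
    intro j
    rcases le_or_gt (σ j) (β j) with h | h
    · obtain ⟨e, he⟩ := Nat.exists_eq_add_of_le h
      have ha : α j = e := by simp only [hα, if_pos h]; omega
      rw [ha, he]; nlinarith
    · have h2 : σ j * β j ≤ σ j * σ j := Nat.mul_le_mul_left _ (le_of_lt h)
      omega
  have hsum : gQ α + (2 * dotp σ β + ∑ j, σ j) = gQ β + p := by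
    have h := Finset.sum_congr rfl (fun j (_ : j ∈ (univ : Finset (Fin (n + 1)))) => key j)
    simp only [Finset.sum_add_distrib, ← Finset.mul_sum] at h
    rw [gQ, gQ, dotp, hp]
    omega
  have hdsum : dotp σ β ≤ dotp σ α + p := by
    have h := Finset.sum_le_sum (fun j (_ : j ∈ (univ : Finset (Fin (n + 1)))) => hdot j)
    simp only [Finset.sum_add_distrib] at h
    rw [dotp, dotp, hp]
    exact h
  have hαi : i ≤ dotp σ α := by omega
  have hf : fcm σ i ≤ gQ α := fcm_le σ hαi
  omega

/-- the changemaker direction: `f(i+p) ≤ f(i) + 2i + p + |σ|₁` -/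
lemma step_le (σ : Fin (n + 1) → ℕ) (hσ : IsChangemaker σ) (h1 : 1 ≤ ∑ j, σ j) (i : ℕ) :
    fcm σ (i + ∑ j, σ j * σ j) ≤ fcm σ i + 2 * i + (∑ j, σ j * σ j) + (∑ j, σ j) := by
  obtain ⟨α, hαi, hαg⟩ := fcm_spec σ h1 i
  have hαi' : i ≤ ∑ j, σ j * α j := hαi
  have hαg' : (∑ j, α j * (α j + 1)) = fcm σ i := hαg
  -- any active coordinate has σ j > (σ·α) - i
  have active : ∀ j, 0 < α j → (∑ j', σ j' * α j') < i + σ j := by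
    intro j hj
    by_contra hcon
    push_neg at hcon
    obtain ⟨m, hm⟩ : ∃ m, α j = m + 1 := ⟨α j - 1, by omega⟩
    set α' : Fin (n + 1) → ℕ := Function.update α j m with hα'
    clear_value α'
    have split : ∀ g : Fin (n + 1) → ℕ,
        ∑ j', g j' = g j + ∑ j' ∈ univ.erase j, g j' :=
      fun g => (Finset.add_sum_erase univ g (mem_univ j)).symm
    have hErase : ∀ j' ∈ univ.erase j, α' j' = α j' := by
      intro j' hj'
      rw [hα']
      exact Function.update_of_ne (Finset.ne_of_mem_erase hj') _ _
    have hαj' : α' j = m := by rw [hα']; exact Function.update_self _ _ _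
    have hd : (∑ j', σ j' * α' j') + σ j = ∑ j', σ j' * α j' := by
      rw [split (fun j' => σ j' * α' j'), split (fun j' => σ j' * α j')]
      have e1 : ∑ j' ∈ univ.erase j, σ j' * α' j' = ∑ j' ∈ univ.erase j, σ j' * α j' :=
        Finset.sum_congr rfl fun j' hj' => by rw [hErase j' hj']
      rw [e1, hαj', hm]; ring
    have hg : (∑ j', α' j' * (α' j' + 1)) + 2 * (m + 1) = ∑ j', α j' * (α j' + 1) := by
      rw [split (fun j' => α' j' * (α' j' + 1)), split (fun j' => α j' * (α j' + 1))]
      have e1 : ∑ j' ∈ univ.erase j, α' j' * (α' j' + 1) =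
          ∑ j' ∈ univ.erase j, α j' * (α j' + 1) :=
        Finset.sum_congr rfl fun j' hj' => by rw [hErase j' hj']
      rw [e1, hαj', hm]; ring
    have hi' : i ≤ dotp σ α' := by
      have e : dotp σ α' = ∑ j', σ j' * α' j' := rfl
      omega
    have hle := fcm_le σ hi'
    have hle' : fcm σ i ≤ ∑ j', α' j' * (α' j' + 1) := hle
    omega
  -- s := (σ·α) - i is at most |σ|₁
  have hs : (∑ j', σ j' * α j') - i ≤ ∑ j, σ j := by
    rcases Nat.eq_or_lt_of_le hαi' with h | h
    · omega
    · have : ∃ j, 0 < α j := by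
        by_contra hc
        push_neg at hc
        have hz : (∑ j', σ j' * α j') = 0 := by
          refine Finset.sum_eq_zero fun j _ => ?_
          have hz0 : α j = 0 := Nat.le_zero.mp (hc j)
          rw [hz0, Nat.mul_zero]
        omega
      obtain ⟨j, hj⟩ := this
      have ha := active j hj
      have h2 : σ j ≤ ∑ j', σ j' :=
        Finset.single_le_sum (f := σ) (fun j' _ => Nat.zero_le _) (mem_univ j)
      omega
  obtain ⟨A, hA⟩ := hσ.2 ((∑ j', σ j' * α j') - i) hs
  set χ : Fin (n + 1) → ℕ := fun j => if j ∈ A then 1 else 0 with hχ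
  clear_value χ
  set β : Fin (n + 1) → ℕ := fun j => α j + (σ j - χ j) with hβ
  clear_value β
  -- pointwise identities
  have key1 : ∀ j, σ j * β j + σ j * χ j = σ j * α j + σ j * σ j := by
    intro j
    by_cases hjA : j ∈ A
    · obtain ⟨m, hm⟩ : ∃ m, σ j = m + 1 := ⟨σ j - 1, by have := hσ.1 j; omega⟩
      have hc : χ j = 1 := by rw [hχ]; simp [hjA]
      have hb : β j = α j + m := by rw [hβ]; simp only [hc, hm]; omega
      rw [hb, hc, hm]; ring
    · have hc : χ j = 0 := by rw [hχ]; simp [hjA]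
      have hb : β j = α j + σ j := by rw [hβ]; simp only [hc]; omega
      rw [hb, hc]; ring
  have key2 : ∀ j, β j * (β j + 1) + 2 * (χ j * (α j + σ j)) =
      α j * (α j + 1) + 2 * (σ j * α j) + σ j * σ j + σ j := by
    intro j
    by_cases hjA : j ∈ A
    · obtain ⟨m, hm⟩ : ∃ m, σ j = m + 1 := ⟨σ j - 1, by have := hσ.1 j; omega⟩
      have hc : χ j = 1 := by rw [hχ]; simp [hjA]
      have hb : β j = α j + m := by rw [hβ]; simp only [hc, hm]; omega
      rw [hb, hc, hm]; ring
    · have hc : χ j = 0 := by rw [hχ]; simp [hjA]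
      have hb : β j = α j + σ j := by rw [hβ]; simp only [hc]; omega
      rw [hb, hc]; ring
  -- sums
  have hχsum : ∑ j, σ j * χ j = (∑ j', σ j' * α j') - i := by
    have hpt : ∀ j, σ j * χ j = if j ∈ A then σ j else 0 := by
      intro j; rw [hχ]; by_cases hjA : j ∈ A <;> simp [hjA]
    rw [Finset.sum_congr rfl fun j _ => hpt j, Finset.sum_ite_mem, Finset.univ_inter, hA]
  have hχsum2 : ∑ j, χ j * (α j + σ j) = (∑ j ∈ A, α j) + ((∑ j', σ j' * α j') - i) := by
    have hpt : ∀ j, χ j * (α j + σ j) = if j ∈ A then α j + σ j else 0 := by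
      intro j; rw [hχ]; by_cases hjA : j ∈ A <;> simp [hjA]
    rw [Finset.sum_congr rfl fun j _ => hpt j, Finset.sum_ite_mem, Finset.univ_inter,
      Finset.sum_add_distrib, hA]
  have hS1 : (∑ j, σ j * β j) + ((∑ j', σ j' * α j') - i) =
      (∑ j', σ j' * α j') + (∑ j, σ j * σ j) := by
    have h := Finset.sum_congr rfl
      (fun j (_ : j ∈ (univ : Finset (Fin (n + 1)))) => key1 j)
    simp only [Finset.sum_add_distrib] at h
    omega
  have hS2 : (∑ j, β j * (β j + 1)) + 2 * ((∑ j ∈ A, α j) + ((∑ j', σ j' * α j') - i)) =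
      (∑ j, α j * (α j + 1)) + 2 * (∑ j', σ j' * α j') + (∑ j, σ j * σ j) + (∑ j, σ j) := by
    have h := Finset.sum_congr rfl
      (fun j (_ : j ∈ (univ : Finset (Fin (n + 1)))) => key2 j)
    simp only [Finset.sum_add_distrib, ← Finset.mul_sum] at h
    omega
  have hβi : i + (∑ j, σ j * σ j) ≤ dotp σ β := by
    have e : dotp σ β = ∑ j, σ j * β j := rfl
    omega
  have hf := fcm_le σ hβi
  have hf' : fcm σ (i + ∑ j, σ j * σ j) ≤ ∑ j, β j * (β j + 1) := hf
  omega

lemma step_eq (σ : Fin (n + 1) → ℕ) (hσ : IsChangemaker σ) (h1 : 1 ≤ ∑ j, σ j) (i : ℕ) :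
    fcm σ (i + ∑ j, σ j * σ j) =
      fcm σ i + 2 * i + (∑ j, σ j * σ j) + (∑ j, σ j) :=
  le_antisymm (step_le σ hσ h1 i) (step_ge σ h1 i)

lemma fcm_formula (σ : Fin (n + 1) → ℕ) (hσ : IsChangemaker σ) (h1 : 1 ≤ ∑ j, σ j)
    (x k : ℕ) :
    fcm σ (x * (∑ j, σ j * σ j) + k) =
      x ^ 2 * (∑ j, σ j * σ j) + x * (∑ j, σ j) + 2 * x * k + fcm σ k := by
  induction x with
  | zero => simp
  | succ x ih =>
    have harg : (x + 1) * (∑ j, σ j * σ j) + k = (x * (∑ j, σ j * σ j) + k) + ∑ j, σ j * σ j := by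
      ring
    rw [harg, step_eq σ hσ h1 _, ih]
    ring

end CMaux

theorem stmt_9 {n : ℕ} (σ : Fin (n + 1) → ℕ) (hσ : IsChangemaker σ)
    (x : ℕ) (hx : 0 < x) (k : ℕ) (hk : k < ∑ i, (σ i) ^ 2) :
    2 * Vcm σ (x * (∑ i, (σ i) ^ 2) + k) =
      x ^ 2 * (∑ i, (σ i) ^ 2) + x * (∑ i, σ i) + 2 * x * k + 2 * Vcm σ k := by
  have h1 : 1 ≤ ∑ j, σ j := by
    calc 1 ≤ σ 0 := hσ.1 0
      _ ≤ ∑ j, σ j := Finset.single_le_sum (fun j _ => Nat.zero_le _) (mem_univ 0)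
  have hpp : (∑ i, (σ i) ^ 2) = ∑ j, σ j * σ j := by
    refine Finset.sum_congr rfl fun j _ => ?_
    rw [pow_two]
  rw [hpp, CMaux.two_Vcm σ h1, CMaux.two_Vcm σ h1, CMaux.fcm_formula σ hσ h1 x k]
end

section
/- Let σ = (σ_0,…,σ_n) be a changemaker vector and let k = (p − |σ|₁)/2 (an integer since p ≡ |σ|₁ mod 2). Then 8·V^σ_k ≤ p + 3·odd(σ). -/
open Finset

theorem stmt_13 {n : ℕ} (σ : Fin (n + 1) → ℕ) (hσ : IsChangemaker σ)
    (k : ℕ) (hk : 2 * k + (∑ i, σ i) = ∑ i, (σ i) ^ 2) :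
    8 * Vcm σ k ≤
      (∑ i, (σ i) ^ 2) +
        3 * (Finset.univ.filter (fun i => Odd (σ i))).card := by
  classical
  obtain ⟨hpos, hrep⟩ := hσ
  -- the sum of the even entries is 2*e
  have hdvd : 2 ∣ ∑ i ∈ univ.filter (fun i => ¬ Odd (σ i)), σ i := by
    refine Finset.dvd_sum fun i hi => ?_
    simp only [mem_filter, Nat.not_odd_iff_even] at hi
    exact hi.2.two_dvd
  obtain ⟨e, he⟩ := hdvd
  have hele : e ≤ ∑ i, σ i := by
    have h1 : ∑ i ∈ univ.filter (fun i => ¬ Odd (σ i)), σ i ≤ ∑ i, σ i :=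
      Finset.sum_le_sum_of_subset (filter_subset _ _)
    omega
  obtain ⟨A, hA⟩ := hrep e hele
  set t : Fin (n+1) → ℕ := fun i => if i ∈ A then 0 else 1 with ht
  set ε : Fin (n+1) → ℕ := fun i => σ i % 2 with hε
  set α : Fin (n+1) → ℕ := fun i => if i ∈ A then (σ i + 1)/2 else (σ i - 1)/2 with hα
  -- per-element identities
  have hG : ∀ i, 4 * (α i * (α i + 1)) + 4 * (t i * ε i) + 4 * (t i * σ i)
      = σ i ^ 2 + 2 * (σ i * ε i) + 3 * ε i + 2 * σ i := by
    intro i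
    have h1 := hpos i
    obtain ⟨c, hc⟩ : ∃ c, σ i = 2*c+1 ∨ σ i = 2*c+2 := ⟨(σ i - 1)/2, by omega⟩
    have hav : α i = (if i ∈ A then (σ i + 1)/2 else (σ i - 1)/2) := rfl
    have htv : t i = (if i ∈ A then 0 else 1) := rfl
    have hεv : ε i = σ i % 2 := rfl
    by_cases hiA : i ∈ A <;> simp only [hiA, if_true, if_false] at hav htv <;>
      rcases hc with hc | hc <;>
      · rw [hav, htv, hεv, hc]
        have h2 : (2*c+1+1)/2 = c+1 := by omega
        have h3 : (2*c+2+1)/2 = c+1 := by omega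
        have h4 : (2*c+1-1)/2 = c := by omega
        have h5 : (2*c+2-1)/2 = c := by omega
        have h6 : (2*c+1) % 2 = 1 := by omega
        have h7 : (2*c+2) % 2 = 0 := by omega
        first
        | (rw [h2, h6]; ring) | (rw [h3, h7]; ring)
        | (rw [h4, h6]; ring) | (rw [h5, h7]; ring)
  have hH : ∀ i, 2 * (σ i * α i) + 2 * (t i * σ i) = σ i ^ 2 + σ i * ε i := by
    intro i
    have h1 := hpos i
    obtain ⟨c, hc⟩ : ∃ c, σ i = 2*c+1 ∨ σ i = 2*c+2 := ⟨(σ i - 1)/2, by omega⟩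
    have hav : α i = (if i ∈ A then (σ i + 1)/2 else (σ i - 1)/2) := rfl
    have htv : t i = (if i ∈ A then 0 else 1) := rfl
    have hεv : ε i = σ i % 2 := rfl
    by_cases hiA : i ∈ A <;> simp only [hiA, if_true, if_false] at hav htv <;>
      rcases hc with hc | hc <;>
      · rw [hav, htv, hεv, hc]
        have h2 : (2*c+1+1)/2 = c+1 := by omega
        have h3 : (2*c+2+1)/2 = c+1 := by omega
        have h4 : (2*c+1-1)/2 = c := by omega
        have h5 : (2*c+2-1)/2 = c := by omega
        have h6 : (2*c+1) % 2 = 1 := by omega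
        have h7 : (2*c+2) % 2 = 0 := by omega
        first
        | (rw [h2, h6]; ring) | (rw [h3, h7]; ring)
        | (rw [h4, h6]; ring) | (rw [h5, h7]; ring)
  -- sum identities
  have sumG : 4 * (∑ i, α i * (α i + 1)) + 4 * (∑ i, t i * ε i) + 4 * (∑ i, t i * σ i)
      = (∑ i, σ i ^ 2) + 2 * (∑ i, σ i * ε i) + 3 * (∑ i, ε i) + 2 * (∑ i, σ i) := by
    have h := Finset.sum_congr rfl (fun i (_ : i ∈ (univ : Finset (Fin (n+1)))) => hG i)
    simpa [Finset.sum_add_distrib, Finset.mul_sum] using h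
  have sumH : 2 * (∑ i, σ i * α i) + 2 * (∑ i, t i * σ i)
      = (∑ i, σ i ^ 2) + (∑ i, σ i * ε i) := by
    have h := Finset.sum_congr rfl (fun i (_ : i ∈ (univ : Finset (Fin (n+1)))) => hH i)
    simpa [Finset.sum_add_distrib, Finset.mul_sum] using h
  -- component sums
  have hεsum : (∑ i, ε i) = (univ.filter (fun i => Odd (σ i))).card := by
    have h1 : ∀ i ∈ (univ : Finset (Fin (n+1))), ε i = (if Odd (σ i) then 1 else 0) := by
      intro i _
      by_cases h : Odd (σ i)
      · simp [hε, h, Nat.odd_iff.mp h]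
      · have h2 : σ i % 2 ≠ 1 := fun hcon => h (Nat.odd_iff.mpr hcon)
        simp only [hε, h, if_false]
        omega
    rw [Finset.sum_congr rfl h1]
    simp [Finset.sum_boole]
  have hσε : (∑ i, σ i * ε i) + 2 * e = ∑ i, σ i := by
    have h1 : ∀ i ∈ (univ : Finset (Fin (n+1))), σ i * ε i = (if Odd (σ i) then σ i else 0) := by
      intro i _
      by_cases h : Odd (σ i)
      · simp [hε, h, Nat.odd_iff.mp h]
      · have h2 : σ i % 2 ≠ 1 := fun hcon => h (Nat.odd_iff.mpr hcon)
        have h3 : σ i % 2 = 0 := by omega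
        simp [hε, h, h3]
    rw [Finset.sum_congr rfl h1, ← Finset.sum_filter]
    have h3 := Finset.sum_filter_add_sum_filter_not (univ : Finset (Fin (n+1)))
      (fun i => Odd (σ i)) σ
    omega
  have htσ : (∑ i, t i * σ i) + e = ∑ i, σ i := by
    have h1 : ∀ i ∈ (univ : Finset (Fin (n+1))),
        t i * σ i + (if i ∈ A then σ i else 0) = σ i := by
      intro i _
      have htv : t i = (if i ∈ A then 0 else 1) := rfl
      by_cases hiA : i ∈ A <;> simp [htv, hiA]
    have h2 := Finset.sum_congr rfl h1
    rw [Finset.sum_add_distrib, Finset.sum_ite_mem, Finset.univ_inter, hA] at h2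
    exact h2
  -- the value is exactly k
  have hval : (∑ i, σ i * α i) = k := by omega
  -- cost bound
  have hcost : 4 * (∑ i, α i * (α i + 1)) ≤
      (∑ i, σ i ^ 2) + 3 * (univ.filter (fun i => Odd (σ i))).card := by omega
  -- cost is even
  have hceven : 2 ∣ (∑ i, α i * (α i + 1)) :=
    Finset.dvd_sum fun i _ => (Nat.even_mul_succ_self (α i)).two_dvd
  obtain ⟨m, hm⟩ := hceven
  -- k ≤ Tcm σ m
  have hT : k ≤ Tcm σ m := by
    have hmem : k ∈ {t : ℕ | ∃ β : Fin (n + 1) → ℕ,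
        (∑ j, β j * (β j + 1)) ≤ 2 * m ∧ t = ∑ j, σ j * β j} :=
      ⟨α, le_of_eq hm, hval.symm⟩
    have hbdd : BddAbove {t : ℕ | ∃ β : Fin (n + 1) → ℕ,
        (∑ j, β j * (β j + 1)) ≤ 2 * m ∧ t = ∑ j, σ j * β j} := by
      refine ⟨∑ j, σ j * (2 * m), ?_⟩
      rintro x ⟨β, hβ, rfl⟩
      refine Finset.sum_le_sum fun j _ => Nat.mul_le_mul_left _ ?_
      have h1 : β j ≤ β j * (β j + 1) := Nat.le_mul_of_pos_right _ (Nat.succ_pos _)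
      have h2 : β j * (β j + 1) ≤ ∑ j', β j' * (β j' + 1) :=
        Finset.single_le_sum (f := fun j' => β j' * (β j' + 1))
          (fun j' _ => Nat.zero_le _) (Finset.mem_univ j)
      omega
    exact le_csSup hbdd hmem
  have hV : Vcm σ k ≤ m := Nat.sInf_le hT
  omega
end

section
/- Fix an integer s ≥ 5 and let σ = (4s+3, 2s+1, s+1, s, 1, …, 1) with s trailing entries equal to 1. Then T^σ_{295} = 110s + 75; that is, 110s + 75 is the greatest element of {σ·α : α ∈ ℤ_{≥0}^{s+4}, Σ_j α_j(α_j+1) ≤ 590}. -/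
open Finset

/-! The value is `σ·α = s K + L` with `K = 4α₀ + 2α₁ + α₂ + α₃` and `L = 3α₀ + α₁ + α₂ + e`, where
`e` is the sum of the trailing entries, which costs at least `2e`. Bounding each `x (x + 1)` below by
its secant lines through consecutive integers gives `K ≤ 110` and, with a parity argument,
`5K + L ≤ 625`, so `σ·α = (s - 5) K + (5K + L) ≤ 110 (s - 5) + 625`. Equality holds at `α = (20, 10, 5, 5, 0, …, 0)`. -/

theorem Tcm_eq_of_isGreatest {n : ℕ} {σ : Fin (n + 1) → ℕ} {m B : ℕ}
    (hle : ∀ α : Fin (n + 1) → ℕ, ∑ j, α j * (α j + 1) ≤ 2 * m → ∑ j, σ j * α j ≤ B)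
    (hattain : ∃ α : Fin (n + 1) → ℕ, ∑ j, α j * (α j + 1) ≤ 2 * m ∧ ∑ j, σ j * α j = B) :
    Tcm σ m = B := by
  refine IsGreatest.csSup_eq ⟨?_, ?_⟩
  · obtain ⟨α, hα, rfl⟩ := hattain
    exact ⟨α, hα, rfl⟩
  · rintro t ⟨α, hα, rfl⟩
    exact hle α hα

theorem Fin.sum_univ_four_add {M : Type*} [AddCommMonoid M] {n : ℕ} (f : Fin (n + 3 + 1) → M) :
    ∑ j, f j = f 0 + f 1 + f 2 + f 3 + ∑ j : Fin n, f j.succ.succ.succ.succ := by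
  simp only [Fin.sum_univ_succ, add_assoc]
  rfl

theorem Nat.two_mul_add_two_mul_le_mul_succ_add_mul_succ (k x : ℕ) :
    (2 * k + 2) * x ≤ k * (k + 1) + x * (x + 1) := by
  rcases le_or_gt x k with h | h <;> nlinarith

section

variable {a b c d : ℕ}

theorem linear_weight_le_110
    (h : a * (a + 1) + b * (b + 1) + c * (c + 1) + d * (d + 1) ≤ 590) :
    4 * a + 2 * b + c + d ≤ 110 := by
  have := Nat.two_mul_add_two_mul_le_mul_succ_add_mul_succ 19 a
  have := Nat.two_mul_add_two_mul_le_mul_succ_add_mul_succ 9 b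
  have := Nat.two_mul_add_two_mul_le_mul_succ_add_mul_succ 4 c
  have := Nat.two_mul_add_two_mul_le_mul_succ_add_mul_succ 4 d
  omega

theorem linear_weight_le_660_add_cost
    (h : a * (a + 1) + b * (b + 1) + c * (c + 1) + d * (d + 1) ≤ 590) :
    46 * a + 22 * b + 12 * c + 10 * d ≤
      660 + (a * (a + 1) + b * (b + 1) + c * (c + 1) + d * (d + 1)) := by
  -- Lagrange multiplier `1/10` for the constraint: the dual bound is `661`, and both sides are even.
  have h10 : 10 * (46 * a + 22 * b + 12 * c + 10 * d) ≤
      6610 + 10 * (a * (a + 1) + b * (b + 1) + c * (c + 1) + d * (d + 1)) := by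
    have := Nat.two_mul_add_two_mul_le_mul_succ_add_mul_succ 19 a
    have := Nat.two_mul_add_two_mul_le_mul_succ_add_mul_succ 20 a
    have := Nat.two_mul_add_two_mul_le_mul_succ_add_mul_succ 9 b
    have := Nat.two_mul_add_two_mul_le_mul_succ_add_mul_succ 4 c
    have := Nat.two_mul_add_two_mul_le_mul_succ_add_mul_succ 5 c
    have := Nat.two_mul_add_two_mul_le_mul_succ_add_mul_succ 3 d
    have := Nat.two_mul_add_two_mul_le_mul_succ_add_mul_succ 4 d
    omega
  obtain ⟨p, hp⟩ := Nat.even_mul_succ_self a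
  obtain ⟨q, hq⟩ := Nat.even_mul_succ_self b
  obtain ⟨r, hr⟩ := Nat.even_mul_succ_self c
  obtain ⟨t, ht⟩ := Nat.even_mul_succ_self d
  omega

theorem dot_le_110_mul_add_75 {s e : ℕ} (hs : 5 ≤ s)
    (h : a * (a + 1) + b * (b + 1) + c * (c + 1) + d * (d + 1) + 2 * e ≤ 590) :
    (4 * s + 3) * a + (2 * s + 1) * b + (s + 1) * c + s * d + e ≤ 110 * s + 75 := by
  have hcost : a * (a + 1) + b * (b + 1) + c * (c + 1) + d * (d + 1) ≤ 590 := by omega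
  have hK := linear_weight_le_110 hcost
  have h5KL : 23 * a + 11 * b + 6 * c + 5 * d + e ≤ 625 := by
    have := linear_weight_le_660_add_cost hcost
    omega
  obtain ⟨u, rfl⟩ : ∃ u, s = u + 5 := ⟨s - 5, by omega⟩
  calc _ = u * (4 * a + 2 * b + c + d) + (23 * a + 11 * b + 6 * c + 5 * d + e) := by ring
    _ ≤ u * 110 + 625 := add_le_add (Nat.mul_le_mul_left u hK) h5KL
    _ = 110 * (u + 5) + 75 := by ring

end

theorem stmt_14 (s : ℕ) (hs : 5 ≤ s) (σ : Fin (s + 3 + 1) → ℕ)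
    (hσ : σ = fun j : Fin (s + 3 + 1) => if j.val = 0 then 4 * s + 3
      else if j.val = 1 then 2 * s + 1
      else if j.val = 2 then s + 1
      else if j.val = 3 then s else 1) :
    Tcm σ 295 = 110 * s + 75 := by
  subst hσ
  have h2 : 2 % (s + 3 + 1) = 2 := Nat.mod_eq_of_lt (by omega)
  have h3 : 3 % (s + 3 + 1) = 3 := Nat.mod_eq_of_lt (by omega)
  apply Tcm_eq_of_isGreatest
  · intro α hα
    rw [Fin.sum_univ_four_add] at hα ⊢
    set e := ∑ j : Fin s, α j.succ.succ.succ.succ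
    have htail : 2 * e ≤
        ∑ j : Fin s, α j.succ.succ.succ.succ * (α j.succ.succ.succ.succ + 1) := by
      rw [mul_sum]
      exact sum_le_sum fun j _ => by
        simpa using Nat.two_mul_add_two_mul_le_mul_succ_add_mul_succ 0 (α _)
    simpa [h2, h3, Fin.val_succ] using dot_le_110_mul_add_75 hs (e := e) (by omega)
  · refine ⟨fun j => if j.val = 0 then 20 else if j.val = 1 then 10
      else if j.val = 2 then 5 else if j.val = 3 then 5 else 0, ?_, ?_⟩
    · rw [Fin.sum_univ_four_add]
      simp [h2, h3, Fin.val_succ]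
    · rw [Fin.sum_univ_four_add]
      simp [h2, h3, Fin.val_succ]
      ring
end

section
/- Fix an integer s ≥ 5 and let σ = (4s+3, 2s+1, s+1, s, 1, …, 1) with s trailing entries equal to 1. Then T^σ_{11s²−33s+24} ≤ 22s² − 22s − 28; that is, for every α ∈ ℤ_{≥0}^{s+4} with Σ_j α_j(α_j+1) ≤ 2(11s² − 33s + 24), one has σ·α ≤ 22s² − 22s − 28. -/
/-!
Write `α = σ - k` on the four large coordinates. Completing the square,
`2 σ·α = Σ α_j(α_j+1) + Σ σ_j(σ_j-1) - Σ (α_j-σ_j)(α_j-σ_j+1)`, and on the coordinates where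
`σ_j = 1` one has `α_j ≤ α_j(α_j+1)/2`. So it suffices that the budget
`Σ α_j(α_j+1) ≤ 2(11s² - 33s + 24)` forces the deficit `Σ k_j(k_j-1)` over the four large
coordinates to be at least `110`. If it were at most `109`, every `k_j` would be at most `10`, and
the budget becomes a condition linear in `s` whose coefficients are checked on the finitely many
remaining `k`. The real relaxation of this last step fails: integrality is essential.
-/

open Finset

theorem Tcm_le_of_forall {n : ℕ} {σ : Fin (n + 1) → ℕ} {m T : ℕ}
    (h : ∀ α : Fin (n + 1) → ℕ, ∑ j, α j * (α j + 1) ≤ 2 * m → ∑ j, σ j * α j ≤ T) :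
    Tcm σ m ≤ T :=
  csSup_le' fun _ ⟨α, hα, ht⟩ => ht ▸ h α hα

theorem two_mul_le_mul_succ (y : ℕ) : 2 * y ≤ y * (y + 1) := by
  nlinarith [Nat.le_self_pow two_ne_zero y]

theorem Int.toNat_mul_pred_le (k : ℤ) : (k.toNat : ℤ) * (k.toNat - 1) ≤ k * (k - 1) := by
  rcases le_or_gt 0 k with hk | hk
  · rw [Int.toNat_of_nonneg hk]
  · rw [Int.toNat_of_nonpos hk.le, Nat.cast_zero]
    nlinarith

theorem Int.mul_sub_sq_le_toNat (k c : ℤ) (hc : 0 ≤ c) :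
    k * c - k ^ 2 ≤ k.toNat * c - (k.toNat : ℤ) ^ 2 := by
  rcases le_or_gt 0 k with hk | hk
  · rw [Int.toNat_of_nonneg hk]
  · rw [Int.toNat_of_nonpos hk.le, Nat.cast_zero]
    nlinarith

theorem small_deficit_check : ∀ k₀ k₁ k₂ k₃ : Fin 11,
    k₀.val ^ 2 + k₁.val ^ 2 + k₂.val ^ 2 + k₃.val ^ 2 ≤ 109 + (k₀.val + k₁.val + k₂.val + k₃.val) →
      8 * k₀.val + 4 * k₁.val + 2 * k₂.val + 2 * k₃.val ≤ 104 ∧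
        47 * k₀.val + 23 * k₁.val + 13 * k₂.val + 11 * k₃.val ≤
          487 + (k₀.val ^ 2 + k₁.val ^ 2 + k₂.val ^ 2 + k₃.val ^ 2) := by
  decide

/-- The left side is `Σ σ_j(σ_j+1) - Σ (σ_j-k_j)(σ_j-k_j+1)` for `σ = (4s+3, 2s+1, s+1, s)`. -/
theorem saving_lt_of_nonneg (s : ℤ) (k₀ k₁ k₂ k₃ : ℕ) (hs : 5 ≤ s)
    (hD : (k₀ : ℤ) * (k₀ - 1) + k₁ * (k₁ - 1) + k₂ * (k₂ - 1) + k₃ * (k₃ - 1) ≤ 109) :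
    k₀ * (8 * s + 7) + k₁ * (4 * s + 3) + k₂ * (2 * s + 3) + k₃ * (2 * s + 1)
      - ((k₀ : ℤ) ^ 2 + k₁ ^ 2 + k₂ ^ 2 + k₃ ^ 2) < 104 * s - 32 := by
  have pred_nonneg (k : ℕ) : 0 ≤ (k : ℤ) * (k - 1) := by nlinarith [Int.le_self_sq k]
  have lt_eleven (k : ℕ) (hk : (k : ℤ) * (k - 1) ≤ 109) : k < 11 := by
    by_contra! h
    have : (11 : ℤ) ≤ k := by exact_mod_cast h
    nlinarith
  obtain ⟨hL, hQ⟩ := small_deficit_check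
    ⟨k₀, lt_eleven k₀ (by linarith [pred_nonneg k₁, pred_nonneg k₂, pred_nonneg k₃])⟩
    ⟨k₁, lt_eleven k₁ (by linarith [pred_nonneg k₀, pred_nonneg k₂, pred_nonneg k₃])⟩
    ⟨k₂, lt_eleven k₂ (by linarith [pred_nonneg k₀, pred_nonneg k₁, pred_nonneg k₃])⟩
    ⟨k₃, lt_eleven k₃ (by linarith [pred_nonneg k₀, pred_nonneg k₁, pred_nonneg k₂])⟩
    (by zify; linarith)
  zify at hL hQ
  -- the left side is `s (8k₀ + 4k₁ + 2k₂ + 2k₃) + …` with `8k₀ + 4k₁ + 2k₂ + 2k₃ ≤ 104`,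
  -- so `s = 5` is the worst case
  nlinarith [mul_nonneg (sub_nonneg.2 hL) (sub_nonneg.2 hs)]

theorem saving_lt (s k₀ k₁ k₂ k₃ : ℤ) (hs : 5 ≤ s)
    (hD : k₀ * (k₀ - 1) + k₁ * (k₁ - 1) + k₂ * (k₂ - 1) + k₃ * (k₃ - 1) ≤ 109) :
    k₀ * (8 * s + 7) + k₁ * (4 * s + 3) + k₂ * (2 * s + 3) + k₃ * (2 * s + 1)
      - (k₀ ^ 2 + k₁ ^ 2 + k₂ ^ 2 + k₃ ^ 2) < 104 * s - 32 := by
  have := saving_lt_of_nonneg s k₀.toNat k₁.toNat k₂.toNat k₃.toNat hs (by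
    linarith [k₀.toNat_mul_pred_le, k₁.toNat_mul_pred_le, k₂.toNat_mul_pred_le,
      k₃.toNat_mul_pred_le])
  linarith [k₀.mul_sub_sq_le_toNat (8 * s + 7) (by linarith),
    k₁.mul_sub_sq_le_toNat (4 * s + 3) (by linarith),
    k₂.mul_sub_sq_le_toNat (2 * s + 3) (by linarith),
    k₃.mul_sub_sq_le_toNat (2 * s + 1) (by linarith)]

theorem deficit_ge (s x₀ x₁ x₂ x₃ : ℤ) (hs : 5 ≤ s)
    (hx : x₀ * (x₀ + 1) + x₁ * (x₁ + 1) + x₂ * (x₂ + 1) + x₃ * (x₃ + 1) ≤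
      2 * (11 * s ^ 2 - 33 * s + 24)) :
    110 ≤ (x₀ - (4 * s + 3)) * (x₀ - (4 * s + 3) + 1) + (x₁ - (2 * s + 1)) * (x₁ - (2 * s + 1) + 1)
      + (x₂ - (s + 1)) * (x₂ - (s + 1) + 1) + (x₃ - s) * (x₃ - s + 1) := by
  by_contra! hD
  have := saving_lt s (4 * s + 3 - x₀) (2 * s + 1 - x₁) (s + 1 - x₂) (s - x₃) hs (by linarith)
  linarith

theorem stmt_16 (s : ℕ) (hs : 5 ≤ s) (σ : Fin (s + 3 + 1) → ℕ)
    (hσ : σ = fun j : Fin (s + 3 + 1) => if j.val = 0 then 4 * s + 3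
      else if j.val = 1 then 2 * s + 1
      else if j.val = 2 then s + 1
      else if j.val = 3 then s else 1) :
    Tcm σ (11 * s ^ 2 - 33 * s + 24) ≤ 22 * s ^ 2 - 22 * s - 28 := by
  subst hσ
  refine Tcm_le_of_forall fun α hα => ?_
  simp only [Fin.sum_univ_succ, Fin.val_succ, Fin.val_zero, Fin.succ_zero_eq_one,
    Fin.succ_one_eq_two, ↓reduceIte, one_ne_zero, Nat.add_eq_zero_iff, and_false,
    Nat.add_eq_right, Nat.reduceEqDiff, one_mul] at hα ⊢
  set Y := ∑ i : Fin s, α i.succ.succ.succ.succ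
  set W := ∑ i : Fin s, α i.succ.succ.succ.succ * (α i.succ.succ.succ.succ + 1)
  have hYW : 2 * Y ≤ W := by
    rw [mul_sum]
    exact sum_le_sum fun i _ => two_mul_le_mul_succ _
  have hs2 : 5 * s ≤ s ^ 2 := by nlinarith
  zify [show 33 * s ≤ 11 * s ^ 2 by omega, show 22 * s ≤ 22 * s ^ 2 by omega,
    show 28 ≤ 22 * s ^ 2 - 22 * s by omega] at hα hYW ⊢
  have hD := deficit_ge s (α 0) (α 1) (α 2) (α (Fin.succ 2)) (by exact_mod_cast hs)
    (by linarith [W.cast_nonneg (α := ℤ)])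
  linarith
end

section
/- Let r₁, r₂, p, s, ν be integers with 1 ≤ r₁ ≤ r₂, p ≥ 1, 1 ≤ s ≤ p, and ν ≥ 0. If 2ν + 2(r₁−1) ≥ r₁²p − r₁s ≥ 2ν and 2ν + 2(r₂−1) ≥ r₂²p − r₂s ≥ 2ν, then either r₂ = r₁, or r₂ = r₁ + 1 and p = 1. -/
theorem stmt_18 (r₁ r₂ p s ν : ℤ)
    (hr₁ : 1 ≤ r₁) (hr₁₂ : r₁ ≤ r₂) (hp : 1 ≤ p)
    (hs1 : 1 ≤ s) (hsp : s ≤ p) (hν : 0 ≤ ν)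
    (hA1 : r₁ ^ 2 * p - r₁ * s ≤ 2 * ν + 2 * (r₁ - 1))
    (hA2 : 2 * ν ≤ r₁ ^ 2 * p - r₁ * s)
    (hB1 : r₂ ^ 2 * p - r₂ * s ≤ 2 * ν + 2 * (r₂ - 1))
    (hB2 : 2 * ν ≤ r₂ ^ 2 * p - r₂ * s) :
    r₂ = r₁ ∨ (r₂ = r₁ + 1 ∧ p = 1) := by
  rcases eq_or_lt_of_le hr₁₂ with h | h
  · exact Or.inl h.symm
  · right
    have hd : r₁ + 1 ≤ r₂ := h
    -- key: (r₂ - r₁) * ((r₁ + r₂) * p - s) ≤ 2 * (r₂ - 1)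
    have key : (r₂ - r₁) * ((r₁ + r₂) * p - s) ≤ 2 * (r₂ - 1) := by nlinarith
    have h1 : r₁ + r₂ - 1 ≤ (r₁ + r₂) * p - s := by nlinarith [mul_le_mul_of_nonneg_left hp (by linarith : (0:ℤ) ≤ r₁ + r₂ - 1)]
    have hd2 : r₂ ≤ r₁ + 1 := by nlinarith [mul_le_mul_of_nonneg_left h1 (by linarith : (0:ℤ) ≤ r₂ - r₁)]
    have hr2 : r₂ = r₁ + 1 := le_antisymm hd2 hd
    have hp1 : p ≤ 1 := by nlinarith [key, hr2]
    exact ⟨hr2, le_antisymm hp1 hp⟩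
end
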